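/- arXiv:2511.04870 — 10 statements merged into one kernel-verified Lean document; each statement's English description precedes it below -/
import Mathlib

section
/- Let d : ℝ^k × ℝ^k → [0,∞) be a continuous function such that d(x,y) = 0 if and only if x = y, and d(ax+b, ay+b) = |a|·d(x,y) for all a ∈ ℝ and b, x, y ∈ ℝ^k. Let f_X and f_Y be square-integrable probability densities on ℝ^k, and assume that 0 is a Lebesgue point with respect to d-balls of the function u(y) := ∫_{ℝ^k} f_Y(x+y) f_X(x) dx, i.e. (1/μ(B_r(0))) ∫_{B_r(0)} |u(y) − u(0)| dy → 0 as r → 0⁺, where B_r(0) := {y ∈ ℝ^k : d(0,y) < r} and μ is Lebesgue measure. Then f_X = f_Y almost everywhere if and only if for every t > 0 one has ∫∫_{{d(x,y)<t}} f_X(x) f_X(y) dx dy = ∫∫_{{d(x,y)<t}} f_Y(x) f_Y(y) dx dy = ∫∫_{{d(x,y)<t}} f_X(x) f_Y(y) dx dy. -/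
open MeasureTheory Filter Set

section Aux

variable {k : ℕ}

/-- Two functions in `L²` have integrable product. -/
lemma MPB_integrable_mul {α : Type*} [MeasurableSpace α] {μ : Measure α} {f g : α → ℝ}
    (hf : MemLp f 2 μ) (hg : MemLp g 2 μ) : Integrable (fun x => f x * g x) μ := by
  have h := L2.integrable_inner (𝕜 := ℝ) (hf.toLp f) (hg.toLp g)
  refine h.congr ?_
  filter_upwards [hf.coeFn_toLp, hg.coeFn_toLp] with x h1 h2
  simp [RCLike.inner_apply, h1, h2, mul_comm]

/-- Continuity of the correlation function of two `L²` functions. -/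
lemma MPB_corr_continuous (φ ψ : (Fin k → ℝ) → ℝ)
    (hφ : MemLp φ 2 volume) (hψ : MemLp ψ 2 volume) :
    Continuous fun y : Fin k → ℝ => ∫ x, φ (x + y) * ψ x := by
  haveI : Fact ((1 : ENNReal) ≤ 2) := ⟨one_le_two⟩
  set Φ : Lp ℝ 2 (volume : Measure (Fin k → ℝ)) := hφ.toLp φ with hΦ
  set Ψ : Lp ℝ 2 (volume : Measure (Fin k → ℝ)) := hψ.toLp ψ with hΨ
  set cm : C(Fin k → ℝ, C(Fin k → ℝ, Fin k → ℝ)) :=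
    (ContinuousMap.mk (fun p : (Fin k → ℝ) × (Fin k → ℝ) => p.2 + p.1)
      (continuous_snd.add continuous_fst)).curry with hcm
  have hmp : ∀ y : Fin k → ℝ, MeasurePreserving (⇑(cm y)) volume volume := fun y =>
    measurePreserving_add_right volume y
  have hT : Continuous fun y : Fin k → ℝ =>
      Lp.compMeasurePreserving (⇑(cm y)) (hmp y) Φ := by
    rw [continuous_iff_continuousAt]
    intro z
    exact ContinuousAt.compMeasurePreservingLp (continuousAt_const) (cm.continuous.continuousAt)
      hmp (by norm_num)
  have hcont : Continuous fun y : Fin k → ℝ =>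
      (inner ℝ (Lp.compMeasurePreserving (⇑(cm y)) (hmp y) Φ) Ψ : ℝ) :=
    hT.inner continuous_const
  convert hcont using 1
  funext y
  rw [L2.inner_def]
  refine integral_congr_ae ?_
  have h1 : ⇑(Lp.compMeasurePreserving (⇑(cm y)) (hmp y) Φ) =ᵐ[volume] ⇑Φ ∘ ⇑(cm y) :=
    Lp.coeFn_compMeasurePreserving Φ (hmp y)
  have h2 : ⇑Φ ∘ ⇑(cm y) =ᵐ[volume] φ ∘ ⇑(cm y) :=
    (hmp y).quasiMeasurePreserving.ae_eq_comp hφ.coeFn_toLp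
  filter_upwards [h1.trans h2, hψ.coeFn_toLp] with x hx1 hx2
  simp only [Function.comp_apply] at hx1
  rw [RCLike.inner_apply, hx1, hx2]
  simp [hcm, ContinuousMap.curry_apply, mul_comm]

/-- Fubini for correlation-type double integrals. -/
lemma MPB_swap (f g : (Fin k → ℝ) → ℝ) (hfi : Integrable f volume) (hgi : Integrable g volume)
    (hfm : Measurable f) (hgm : Measurable g) (S : Set (Fin k → ℝ)) (hS : MeasurableSet S) :
    ∫ x, f x * ∫ z in S, g (x + z) = ∫ z in S, ∫ x, g (x + z) * f x := by
  have hF : Measurable fun p : (Fin k → ℝ) × (Fin k → ℝ) => f p.1 * g (p.1 + p.2) :=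
    (hfm.comp measurable_fst).mul (hgm.comp (measurable_fst.add measurable_snd))
  have hint : Integrable (Function.uncurry fun x z => f x * g (x + z))
      (volume.prod (volume.restrict S)) := by
    refine ⟨hF.aestronglyMeasurable, ?_⟩
    show (∫⁻ p : (Fin k → ℝ) × (Fin k → ℝ), (‖f p.1 * g (p.1 + p.2)‖₊ : ENNReal)
      ∂(volume.prod (volume.restrict S))) < ⊤
    have hmeas : Measurable fun p : (Fin k → ℝ) × (Fin k → ℝ) =>
        ((‖f p.1 * g (p.1 + p.2)‖₊ : ENNReal)) := hF.nnnorm.coe_nnreal_ennreal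
    rw [lintegral_prod _ hmeas.aemeasurable]
    have hb : ∀ x : Fin k → ℝ,
        (∫⁻ z in S, (‖f x * g (x + z)‖₊ : ENNReal)) ≤
          (‖f x‖₊ : ENNReal) * ∫⁻ z, (‖g z‖₊ : ENNReal) := by
      intro x
      calc (∫⁻ z in S, (‖f x * g (x + z)‖₊ : ENNReal))
          = ∫⁻ z in S, (‖f x‖₊ : ENNReal) * (‖g (x + z)‖₊ : ENNReal) := by
            simp_rw [nnnorm_mul, ENNReal.coe_mul]
        _ = (‖f x‖₊ : ENNReal) * ∫⁻ z in S, (‖g (x + z)‖₊ : ENNReal) :=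
            lintegral_const_mul _ ((hgm.comp (measurable_const.add measurable_id)).nnnorm.coe_nnreal_ennreal)
        _ ≤ (‖f x‖₊ : ENNReal) * ∫⁻ z, (‖g (x + z)‖₊ : ENNReal) := by
            gcongr
            exact Measure.restrict_le_self
        _ = (‖f x‖₊ : ENNReal) * ∫⁻ z, (‖g z‖₊ : ENNReal) := by
            rw [lintegral_add_left_eq_self (fun z => (‖g z‖₊ : ENNReal)) x]
    calc (∫⁻ x, ∫⁻ z in S, (‖f x * g (x + z)‖₊ : ENNReal))
        ≤ ∫⁻ x, (‖f x‖₊ : ENNReal) * ∫⁻ z, (‖g z‖₊ : ENNReal) := lintegral_mono hb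
      _ = (∫⁻ x, (‖f x‖₊ : ENNReal)) * ∫⁻ z, (‖g z‖₊ : ENNReal) :=
          lintegral_mul_const _ hfm.nnnorm.coe_nnreal_ennreal
      _ < ⊤ := ENNReal.mul_lt_top hfi.2 hgi.2
  calc ∫ x, f x * ∫ z in S, g (x + z)
      = ∫ x, ∫ z in S, f x * g (x + z) := by
        refine integral_congr_ae (Eventually.of_forall fun x => ?_)
        exact (integral_const_mul (f x) fun z => g (x + z)).symm
    _ = ∫ z in S, ∫ x, f x * g (x + z) := integral_integral_swap hint
    _ = ∫ z in S, ∫ x, g (x + z) * f x := by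
        refine integral_congr_ae (Eventually.of_forall fun z => ?_)
        simp_rw [mul_comm]

end Aux

theorem maa_pearl_bartoszynski {k : ℕ}
    (d : (Fin k → ℝ) → (Fin k → ℝ) → ℝ)
    (hd_cont : Continuous (fun p : (Fin k → ℝ) × (Fin k → ℝ) => d p.1 p.2))
    (hd_nonneg : ∀ x y, 0 ≤ d x y)
    (hd_zero : ∀ x y, d x y = 0 ↔ x = y)
    (hd_hom : ∀ (a : ℝ) (b x y : Fin k → ℝ), d (a • x + b) (a • y + b) = |a| * d x y)
    -- f_X and f_Y are square-integrable probability densities on ℝ^k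
    (fX fY : (Fin k → ℝ) → ℝ)
    (hfX_meas : Measurable fX) (hfY_meas : Measurable fY)
    (hfX_nonneg : ∀ x, 0 ≤ fX x) (hfY_nonneg : ∀ x, 0 ≤ fY x)
    (hfX_prob : ∫ x, fX x = 1) (hfY_prob : ∫ x, fY x = 1)
    (hfX_sq : MemLp fX 2 volume) (hfY_sq : MemLp fY 2 volume)
    -- 0 is a Lebesgue point w.r.t. d-balls of u(y) = ∫ f_Y(x+y) f_X(x) dx
    (u : (Fin k → ℝ) → ℝ)
    (hu : u = fun y => ∫ x, fY (x + y) * fX x)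
    (hLeb : Tendsto
      (fun r => (∫ y in {y : Fin k → ℝ | d 0 y < r}, |u y - u 0|) /
        (volume {y : Fin k → ℝ | d 0 y < r}).toReal)
      (nhdsWithin 0 (Ioi 0)) (nhds 0)) :
    (fX =ᵐ[volume] fY) ↔
      (∀ t, 0 < t →
        (∫ x, fX x * ∫ y in {y : Fin k → ℝ | d x y < t}, fX y) =
          (∫ x, fX x * ∫ y in {y : Fin k → ℝ | d x y < t}, fY y) ∧
        (∫ x, fY x * ∫ y in {y : Fin k → ℝ | d x y < t}, fY y) =
          (∫ x, fX x * ∫ y in {y : Fin k → ℝ | d x y < t}, fY y)) := by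
  constructor
  · intro hae t ht
    have hin : ∀ x : Fin k → ℝ,
        (∫ y in {y : Fin k → ℝ | d x y < t}, fX y) =
          ∫ y in {y : Fin k → ℝ | d x y < t}, fY y := fun x =>
      integral_congr_ae (ae_restrict_of_ae hae)
    constructor
    · refine integral_congr_ae (Eventually.of_forall fun x => ?_)
      dsimp only
      rw [hin x]
    · refine integral_congr_ae (hae.mono fun x hx => ?_)
      dsimp only
      rw [hx]
  · intro hI
    -- the densities are integrable
    have hfX_int : Integrable fX volume := by
      by_contra h
      rw [integral_undef h] at hfX_prob
      exact one_ne_zero hfX_prob.symm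
    have hfY_int : Integrable fY volume := by
      by_contra h
      rw [integral_undef h] at hfY_prob
      exact one_ne_zero hfY_prob.symm
    -- degenerate case `k = 0`
    rcases isEmpty_or_nonempty (Fin k) with hk | hk
    · haveI := Pi.uniqueOfIsEmpty (fun _ : Fin k => ℝ)
      have hvol : (volume (univ : Set (Fin k → ℝ))) = 1 := by
        rw [volume_pi, Measure.pi_univ]
        simp
      have h1 := integral_unique (μ := (volume : Measure (Fin k → ℝ))) fX
      have h2 := integral_unique (μ := (volume : Measure (Fin k → ℝ))) fY
      rw [hfX_prob, measureReal_def, hvol] at h1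
      rw [hfY_prob, measureReal_def, hvol] at h2
      simp only [ENNReal.toReal_one, one_smul] at h1 h2
      refine Eventually.of_forall fun x => ?_
      have e1 : fX x = fX (@default (Fin k → ℝ) Unique.instInhabited) :=
        congrArg fX (Subsingleton.elim _ _)
      have e2 : fY x = fY (@default (Fin k → ℝ) Unique.instInhabited) :=
        congrArg fY (Subsingleton.elim _ _)
      exact ((e1.trans h1.symm).trans h2).trans e2.symm
    -- main case: find a norm lower bound for `d 0 ·`
    have hd0 : Continuous fun y : Fin k → ℝ => d 0 y :=
      hd_cont.comp (continuous_const.prodMk continuous_id)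
    obtain ⟨y₀, hy₀, hmin'⟩ := (isCompact_sphere (0 : Fin k → ℝ) 1).exists_isMinOn
      (NormedSpace.sphere_nonempty.mpr zero_le_one) hd0.continuousOn
    have hmin := isMinOn_iff.mp hmin'
    have hy₀norm : ‖y₀‖ = 1 := mem_sphere_zero_iff_norm.mp hy₀
    have hy₀ne : y₀ ≠ 0 := by
      intro h
      rw [h, norm_zero] at hy₀norm
      exact one_ne_zero hy₀norm.symm
    set c : ℝ := d 0 y₀ with hc
    have hcpos : 0 < c := by
      rcases (hd_nonneg 0 y₀).lt_or_eq with h | h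
      · exact h
      · exact absurd ((hd_zero 0 y₀).mp h.symm).symm hy₀ne
    have hlow : ∀ y : Fin k → ℝ, c * ‖y‖ ≤ d 0 y := by
      intro y
      rcases eq_or_ne y 0 with rfl | hy
      · simp [(hd_zero (0 : Fin k → ℝ) 0).mpr rfl]
      · have hn : ‖y‖ ≠ 0 := norm_ne_zero_iff.mpr hy
        have hy1 : ‖y‖⁻¹ • y ∈ Metric.sphere (0 : Fin k → ℝ) 1 := by
          rw [mem_sphere_zero_iff_norm, norm_smul, norm_inv, norm_norm,
            inv_mul_cancel₀ hn]
        have h1 : c ≤ d 0 (‖y‖⁻¹ • y) := hmin _ hy1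
        have h2 : d 0 y = ‖y‖ * d 0 (‖y‖⁻¹ • y) := by
          have h := hd_hom ‖y‖ 0 0 (‖y‖⁻¹ • y)
          rw [smul_zero, add_zero, add_zero, smul_smul, mul_inv_cancel₀ hn, one_smul,
            abs_norm] at h
          exact h
        rw [h2, mul_comm]
        have hnn : (0:ℝ) ≤ ‖y‖ := norm_nonneg y
        exact mul_le_mul_of_nonneg_left h1 hnn
    -- the d-balls around the origin
    have hSopen : ∀ t : ℝ, IsOpen {y : Fin k → ℝ | d 0 y < t} := fun t =>
      isOpen_lt hd0 continuous_const
    have hSmeas : ∀ t : ℝ, MeasurableSet {y : Fin k → ℝ | d 0 y < t} := fun t =>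
      (hSopen t).measurableSet
    have hSsub : ∀ t : ℝ, 0 < t →
        {y : Fin k → ℝ | d 0 y < t} ⊆ Metric.closedBall 0 (t / c) := by
      intro t ht y hy
      rw [Metric.mem_closedBall, dist_zero_right, le_div_iff₀ hcpos]
      have h1 := hlow y
      have h2 : d 0 y < t := hy
      nlinarith
    have hSfin : ∀ t : ℝ, 0 < t → volume {y : Fin k → ℝ | d 0 y < t} < ⊤ := fun t ht =>
      lt_of_le_of_lt (measure_mono (hSsub t ht))
        (isCompact_closedBall (0 : Fin k → ℝ) (t / c)).measure_lt_top
    -- integrability of continuous functions on the balls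
    have hIntOn : ∀ (h : (Fin k → ℝ) → ℝ), Continuous h → ∀ t : ℝ, 0 < t →
        IntegrableOn h {y : Fin k → ℝ | d 0 y < t} volume := by
      intro h hcont t ht
      exact ((hcont.continuousOn).integrableOn_compact
        (isCompact_closedBall (0 : Fin k → ℝ) (t / c))).mono_set (hSsub t ht)
    -- translation identity for set integrals
    have htrans : ∀ (g : (Fin k → ℝ) → ℝ) (x : Fin k → ℝ) (t : ℝ),
        (∫ y in {y : Fin k → ℝ | d x y < t}, g y) =
          ∫ z in {z : Fin k → ℝ | d 0 z < t}, g (x + z) := by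
      intro g x t
      have hdx : ∀ z : Fin k → ℝ, d x (x + z) = d 0 z := by
        intro z
        have h := hd_hom 1 x 0 z
        rw [one_smul, one_smul, zero_add, abs_one, one_mul] at h
        rw [add_comm x z]
        exact h
      have himg : (fun z : Fin k → ℝ => x + z) '' {z : Fin k → ℝ | d 0 z < t} =
          {y : Fin k → ℝ | d x y < t} := by
        ext y
        simp only [mem_image, mem_setOf_eq]
        constructor
        · rintro ⟨z, hz, rfl⟩
          rwa [hdx z]
        · intro hy
          refine ⟨y - x, ?_, by abel⟩
          have h := hdx (y - x)
          have hxy : x + (y - x) = y := by abel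
          rw [hxy] at h
          rwa [← h]
      rw [← himg]
      exact MeasurePreserving.setIntegral_image_emb (measurePreserving_add_left volume x)
        (MeasurableEquiv.addLeft x).measurableEmbedding g {z : Fin k → ℝ | d 0 z < t}
    -- key Fubini identity
    have hkey : ∀ (f g : (Fin k → ℝ) → ℝ), Integrable f volume → Integrable g volume →
        Measurable f → Measurable g → ∀ t : ℝ,
        (∫ x, f x * ∫ y in {y : Fin k → ℝ | d x y < t}, g y) =
          ∫ z in {z : Fin k → ℝ | d 0 z < t}, ∫ x, g (x + z) * f x := by
      intro f g hfi hgi hfm hgm t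
      calc (∫ x, f x * ∫ y in {y : Fin k → ℝ | d x y < t}, g y)
          = ∫ x, f x * ∫ z in {z : Fin k → ℝ | d 0 z < t}, g (x + z) := by
            refine integral_congr_ae (Eventually.of_forall fun x => ?_)
            dsimp only
            rw [htrans g x t]
        _ = ∫ z in {z : Fin k → ℝ | d 0 z < t}, ∫ x, g (x + z) * f x :=
            MPB_swap f g hfi hgi hfm hgm _ (hSmeas t)
    -- the three correlation functions
    set A : (Fin k → ℝ) → ℝ := fun y => ∫ x, fX (x + y) * fX x with hA
    set B : (Fin k → ℝ) → ℝ := fun y => ∫ x, fY (x + y) * fY x with hB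
    set U : (Fin k → ℝ) → ℝ := fun y => ∫ x, fY (x + y) * fX x with hU
    have hAcont : Continuous A := MPB_corr_continuous fX fX hfX_sq hfX_sq
    have hBcont : Continuous B := MPB_corr_continuous fY fY hfY_sq hfY_sq
    have hUcont : Continuous U := MPB_corr_continuous fY fX hfY_sq hfX_sq
    -- the hypothesis in correlation form
    have hAU : ∀ t : ℝ, 0 < t →
        (∫ z in {z : Fin k → ℝ | d 0 z < t}, A z) =
          ∫ z in {z : Fin k → ℝ | d 0 z < t}, U z := by
      intro t ht
      have h1 := (hI t ht).1
      rw [hkey fX fX hfX_int hfX_int hfX_meas hfX_meas t,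
        hkey fX fY hfX_int hfY_int hfX_meas hfY_meas t] at h1
      exact h1
    have hBU : ∀ t : ℝ, 0 < t →
        (∫ z in {z : Fin k → ℝ | d 0 z < t}, B z) =
          ∫ z in {z : Fin k → ℝ | d 0 z < t}, U z := by
      intro t ht
      have h2 := (hI t ht).2
      rw [hkey fY fY hfY_int hfY_int hfY_meas hfY_meas t,
        hkey fX fY hfX_int hfY_int hfX_meas hfY_meas t] at h2
      exact h2
    set H : (Fin k → ℝ) → ℝ := fun y => A y + B y - 2 * U y with hH
    have hHcont : Continuous H := (hAcont.add hBcont).sub (continuous_const.mul hUcont)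
    have hHzero : ∀ t : ℝ, 0 < t → (∫ y in {y : Fin k → ℝ | d 0 y < t}, H y) = 0 := by
      intro t ht
      have hAi := hIntOn A hAcont t ht
      have hBi := hIntOn B hBcont t ht
      have hUi := hIntOn U hUcont t ht
      calc (∫ y in {y : Fin k → ℝ | d 0 y < t}, H y)
          = (∫ y in {y : Fin k → ℝ | d 0 y < t}, A y) +
              (∫ y in {y : Fin k → ℝ | d 0 y < t}, B y) -
              2 * ∫ y in {y : Fin k → ℝ | d 0 y < t}, U y := by
            have h1 : IntegrableOn (fun y => A y + B y) {y : Fin k → ℝ | d 0 y < t}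
                volume := hAi.add hBi
            have h2 : IntegrableOn (fun y => 2 * U y) {y : Fin k → ℝ | d 0 y < t}
                volume := hUi.const_mul 2
            rw [hH]
            rw [integral_sub h1 h2, integral_add hAi hBi, integral_const_mul]
        _ = 0 := by
            rw [hAU t ht, hBU t ht]
            ring
    -- H 0 ≤ 0
    have hH0 : H 0 ≤ 0 := by
      by_contra hpos
      push_neg at hpos
      obtain ⟨δ, hδ, hδ'⟩ := Metric.continuousAt_iff.mp hHcont.continuousAt (H 0 / 2)
        (half_pos hpos)
      set t : ℝ := c * δ / 2 with htdef
      have ht : 0 < t := by positivity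
      have hsub2 : ∀ y ∈ {y : Fin k → ℝ | d 0 y < t}, H 0 / 2 ≤ H y := by
        intro y hy
        have h1 := hlow y
        have h2 : d 0 y < t := hy
        have h3 : ‖y‖ < δ := by nlinarith [norm_nonneg y]
        have h4 := hδ' (x := y) (by rwa [dist_zero_right])
        rw [Real.dist_eq] at h4
        have h5 := abs_lt.mp h4
        linarith [h5.1]
      have hmem : (0 : Fin k → ℝ) ∈ {y : Fin k → ℝ | d 0 y < t} := by
        have : d (0 : Fin k → ℝ) 0 = 0 := (hd_zero 0 0).mpr rfl
        simpa [this] using ht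
      have hpos' : 0 < volume {y : Fin k → ℝ | d 0 y < t} :=
        (hSopen t).measure_pos volume ⟨0, hmem⟩
      have hfin := hSfin t ht
      have hge := setIntegral_ge_of_const_le (hSmeas t) hfin.ne hsub2
        (hIntOn H hHcont t ht)
      rw [hHzero t ht] at hge
      have htr : 0 < (volume {y : Fin k → ℝ | d 0 y < t}).toReal :=
        ENNReal.toReal_pos hpos'.ne' hfin.ne
      exact absurd hge (not_le.mpr (mul_pos htr (half_pos hpos)))
    -- H 0 = ∫ (fX - fY)²
    have hXX2 : Integrable (fun x => fX x * fX x) volume := MPB_integrable_mul hfX_sq hfX_sq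
    have hYY2 : Integrable (fun x => fY x * fY x) volume := MPB_integrable_mul hfY_sq hfY_sq
    have hXY2 : Integrable (fun x => fY x * fX x) volume := MPB_integrable_mul hfY_sq hfX_sq
    have hsq_int : Integrable (fun x => (fX x - fY x) * (fX x - fY x)) volume :=
      MPB_integrable_mul (hfX_sq.sub hfY_sq) (hfX_sq.sub hfY_sq)
    have hexp : (∫ x, (fX x - fY x) * (fX x - fY x)) = H 0 := by
      have e1 : ∀ x : Fin k → ℝ, (fX x - fY x) * (fX x - fY x) =
          fX x * fX x + fY x * fY x - 2 * (fY x * fX x) := by intro x; ring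
      have hA0 : A 0 = ∫ x, fX x * fX x := by
        rw [hA]; simp only [add_zero]
      have hB0 : B 0 = ∫ x, fY x * fY x := by
        rw [hB]; simp only [add_zero]
      have hU0 : U 0 = ∫ x, fY x * fX x := by
        rw [hU]; simp only [add_zero]
      calc (∫ x, (fX x - fY x) * (fX x - fY x))
          = ∫ x, (fX x * fX x + fY x * fY x - 2 * (fY x * fX x)) :=
            integral_congr_ae (Eventually.of_forall fun x => e1 x)
        _ = (∫ x, fX x * fX x) + (∫ x, fY x * fY x) - 2 * ∫ x, fY x * fX x := by
            have h1 : Integrable (fun x => fX x * fX x + fY x * fY x) volume :=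
              hXX2.add hYY2
            have h2 : Integrable (fun x => 2 * (fY x * fX x)) volume :=
              hXY2.const_mul 2
            rw [integral_sub h1 h2, integral_add hXX2 hYY2, integral_const_mul]
        _ = H 0 := by
            rw [hH]
            dsimp only
            rw [hA0, hB0, hU0]
    have hzero : (∫ x, (fX x - fY x) * (fX x - fY x)) = 0 := by
      refine le_antisymm (hexp ▸ hH0) (integral_nonneg fun x => mul_self_nonneg _)
    have hae0 := (integral_eq_zero_iff_of_nonneg
      (fun x => mul_self_nonneg (fX x - fY x)) hsq_int).mp hzero
    filter_upwards [hae0] with x hx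
    have : fX x - fY x = 0 := mul_self_eq_zero.mp hx
    linarith
end

section
/- Let h be a volume-regular generalized distance function on ℝ^k with comparison point ξ ∈ ℝ^k and comparison function δ. Let f be a probability density on ℝ^k that is Lebesgue differentiable with respect to h at almost every point and has uniformly bounded centered oscillation with respect to h, and suppose f·δ(·,ξ) ∈ L¹(ℝ^k). Then lim_{t→0⁺} ∫_{ℝ^k} f(x) · ( ∫_{B_t^h(x)} (f(y) − f(x)) dy ) / Φ(ξ,t) dx = 0. -/
open MeasureTheory Filter Set
open scoped ENNReal

/-- The `h`-ball of radius `t` around `x`. -/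
def hball {k : ℕ} (h : (Fin k → ℝ) → (Fin k → ℝ) → ℝ)
    (x : Fin k → ℝ) (t : ℝ) : Set (Fin k → ℝ) := {y | h x y < t}

/-- The volume function `Φ(x,t)` of `h`-balls. -/
noncomputable def Phi {k : ℕ} (h : (Fin k → ℝ) → (Fin k → ℝ) → ℝ)
    (x : Fin k → ℝ) (t : ℝ) : ℝ := (volume (hball h x t)).toReal

lemma Phi_nonneg {k : ℕ} (h : (Fin k → ℝ) → (Fin k → ℝ) → ℝ)
    (x : Fin k → ℝ) (t : ℝ) : 0 ≤ Phi h x t := ENNReal.toReal_nonneg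

lemma aux_lintegral_tendsto {α : Type*} [MeasurableSpace α] {μ : Measure α}
    (g : ℕ → α → ℝ≥0∞) (bound : α → ℝ≥0∞)
    (hb : ∫⁻ x, bound x ∂μ ≠ ⊤)
    (hle : ∀ n, ∀ᵐ x ∂μ, g n x ≤ bound x)
    (hlim : ∀ᵐ x ∂μ, Tendsto (fun n => g n x) atTop (nhds 0)) :
    Tendsto (fun n => ∫⁻ x, g n x ∂μ) atTop (nhds 0) := by
  have hfin : ∀ n, ∫⁻ x, g n x ∂μ ≠ ⊤ := fun n =>
    ne_top_of_le_ne_top hb (lintegral_mono_ae (hle n))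
  have hchoice : ∀ n : ℕ, ∃ φ : α → ℝ≥0∞, Measurable φ ∧ φ ≤ g n ∧
      ∫⁻ x, g n x ∂μ ≤ (∫⁻ x, φ x ∂μ) + (n : ℝ≥0∞)⁻¹ := by
    intro n
    by_cases hsmall : ∫⁻ x, g n x ∂μ ≤ (n : ℝ≥0∞)⁻¹
    · exact ⟨0, measurable_const, fun x => zero_le, by simpa using hsmall⟩
    · push_neg at hsmall
      have hn0 : n ≠ 0 := by
        rintro rfl
        simp only [Nat.cast_zero, ENNReal.inv_zero] at hsmall
        exact hfin 0 (top_le_iff.mp hsmall.le)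
      have hne0 : ∫⁻ x, g n x ∂μ ≠ 0 := (lt_of_le_of_lt zero_le hsmall).ne'
      have hinv0 : ((n : ℝ≥0∞)⁻¹) ≠ 0 := by
        simp [ENNReal.inv_ne_zero]
      have hlt : ∫⁻ x, g n x ∂μ - (n : ℝ≥0∞)⁻¹ < ∫⁻ x, g n x ∂μ :=
        ENNReal.sub_lt_self (hfin n) hne0 hinv0
      rw [← iSup_lintegral_measurable_le_eq_lintegral (g n)] at hlt
      obtain ⟨φ, hφ⟩ := lt_iSup_iff.mp hlt
      obtain ⟨hφmeas, hφ⟩ := lt_iSup_iff.mp hφ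
      obtain ⟨hφle, hφ⟩ := lt_iSup_iff.mp hφ
      refine ⟨φ, hφmeas, hφle, ?_⟩
      rw [iSup_lintegral_measurable_le_eq_lintegral (g n)] at hφ
      have := (ENNReal.sub_lt_iff_lt_right (by simp [hn0]) hsmall.le).mp hφ
      exact this.le
  choose φ hφmeas hφle hφint using hchoice
  have hDCT : Tendsto (fun n => ∫⁻ x, φ n x ∂μ) atTop (nhds 0) := by
    have := tendsto_lintegral_of_dominated_convergence (μ := μ) (F := fun n x => φ n x)
      (f := fun _ => 0) bound hφmeas
      (fun n => (hle n).mono fun x hx => le_trans (hφle n x) hx) hb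
      (hlim.mono fun x hx => tendsto_of_tendsto_of_tendsto_of_le_of_le
        tendsto_const_nhds hx (fun n => zero_le) (fun n => hφle n x))
    simpa using this
  have h1 : Tendsto (fun n => (∫⁻ x, φ n x ∂μ) + (n : ℝ≥0∞)⁻¹) atTop (nhds 0) := by
    simpa using hDCT.add ENNReal.tendsto_inv_nat_nhds_zero
  exact tendsto_of_tendsto_of_tendsto_of_le_of_le tendsto_const_nhds h1
    (fun n => zero_le) hφint

theorem oscillation_term_vanishes {k : ℕ}
    (h : (Fin k → ℝ) → (Fin k → ℝ) → ℝ)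
    -- generalized distance function
    (h_nonneg : ∀ x y, 0 ≤ h x y)
    (h_zero : ∀ x y, h x y = 0 ↔ x = y)
    -- volume-regularity, with comparison point ξ, comparison function δ, constants c, C
    (ε₀ : ℝ) (hε₀ : 0 < ε₀)
    (h_meas : ∀ x t, 0 < t → t < ε₀ → MeasurableSet (hball h x t))
    (h_lim : ∀ x, Tendsto (fun t => Phi h x t) (nhdsWithin 0 (Ioi 0)) (nhds 0))
    (h_posvol : ∀ᵐ x ∂(volume : Measure (Fin k → ℝ)), ∀ t, 0 < t → t < ε₀ →
      0 < volume (hball h x t) ∧ volume (hball h x t) < ⊤)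
    (ξ : Fin k → ℝ) (δ : (Fin k → ℝ) → (Fin k → ℝ) → ℝ)
    (hδ_pos : ∀ x y, 0 < δ x y)
    (c C : ℝ) (hc : 0 < c) (hC : 0 < C)
    (h_comp : ∀ᵐ x ∂(volume : Measure (Fin k → ℝ)), ∀ t, 0 < t → t < ε₀ →
      c * δ x ξ ≤ Phi h x t / Phi h ξ t ∧ Phi h x t / Phi h ξ t ≤ C * δ x ξ)
    -- f is a probability density on ℝ^k
    (f : (Fin k → ℝ) → ℝ)
    (hf_meas : Measurable f)
    (hf_nonneg : ∀ x, 0 ≤ f x)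
    (hf_prob : ∫ x, f x = 1)
    -- Lebesgue differentiability with respect to h at almost every point
    (hf_diff : ∀ᵐ x ∂(volume : Measure (Fin k → ℝ)),
      Tendsto (fun t => (∫ y in hball h x t, |f y - f x|) / Phi h x t)
        (nhdsWithin 0 (Ioi 0)) (nhds 0))
    -- uniformly bounded centered oscillation with respect to h
    (A : ℝ)
    (hf_osc : ∀ᵐ x ∂(volume : Measure (Fin k → ℝ)), ∀ t, 0 < t → t < ε₀ →
      (∫ y in hball h x t, |f y - f x|) ≤ A * Phi h x t)
    -- integrability condition
    (hint_f : Integrable (fun x => f x * δ x ξ)) :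
    Tendsto (fun t => ∫ x, f x * ((∫ y in hball h x t, (f y - f x)) / Phi h ξ t))
      (nhdsWithin 0 (Ioi 0)) (nhds 0) := by
  -- the ambient measure is nonzero
  have hμ : (volume : Measure (Fin k → ℝ)) ≠ 0 := by
    have : (0 : ℝ≥0∞) < volume (univ : Set (Fin k → ℝ)) :=
      isOpen_univ.measure_pos volume univ_nonempty
    intro h0
    rw [h0] at this
    simp at this
  haveI : (MeasureTheory.ae (volume : Measure (Fin k → ℝ))).NeBot := ae_neBot.mpr hμ
  -- a good reference point
  obtain ⟨x₀, hx₀comp, hx₀pos, hx₀osc⟩ := (h_comp.and (h_posvol.and hf_osc)).exists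
  -- Φ(ξ,t) is positive for small t
  have hΦξ : ∀ t, 0 < t → t < ε₀ → 0 < Phi h ξ t := by
    intro t ht htε
    rcases lt_or_ge 0 (Phi h ξ t) with h' | h'
    · exact h'
    have hz : Phi h ξ t = 0 := le_antisymm h' (Phi_nonneg h ξ t)
    have hco := (hx₀comp t ht htε).1
    rw [hz, div_zero] at hco
    nlinarith [hδ_pos x₀ ξ]
  -- A is nonnegative
  have hA : 0 ≤ A := by
    have h1 := hx₀osc (ε₀/2) (by positivity) (by linarith)
    have h2 := (hx₀pos (ε₀/2) (by positivity) (by linarith)).1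
    have h3 := (hx₀pos (ε₀/2) (by positivity) (by linarith)).2
    have hΦpos : 0 < Phi h x₀ (ε₀/2) := ENNReal.toReal_pos h2.ne' h3.ne
    have h4 : (0:ℝ) ≤ ∫ y in hball h x₀ (ε₀/2), |f y - f x₀| :=
      integral_nonneg fun y => abs_nonneg _
    nlinarith
  rw [tendsto_iff_seq_tendsto]
  intro u hu
  have hu0 : Tendsto u atTop (nhds 0) := hu.mono_right nhdsWithin_le_nhds
  have hev : ∀ᶠ n in atTop, 0 < u n ∧ u n < ε₀ := by
    have h1 : ∀ᶠ n in atTop, u n ∈ Ioi (0:ℝ) := hu.eventually self_mem_nhdsWithin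
    have h2 : ∀ᶠ n in atTop, u n < ε₀ := hu0.eventually (eventually_lt_nhds hε₀)
    filter_upwards [h1, h2] with n hn1 hn2 using ⟨hn1, hn2⟩
  set v : ℕ → ℝ := fun n => if 0 < u n ∧ u n < ε₀ then u n else ε₀/2 with hv
  have hv_mem : ∀ n, 0 < v n ∧ v n < ε₀ := by
    intro n
    by_cases hn : 0 < u n ∧ u n < ε₀
    · simpa [hv, hn] using hn
    · simp only [hv, hn, if_false]
      constructor <;> linarith
  have huv : u =ᶠ[atTop] v := hev.mono fun n hn => by simp [hv, hn]
  have hvtend : Tendsto v atTop (nhdsWithin 0 (Ioi 0)) := hu.congr' huv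
  set g : ℕ → (Fin k → ℝ) → ℝ := fun n x =>
    f x * ((∫ y in hball h x (v n), (f y - f x)) / Phi h ξ (v n)) with hg
  set G : ℕ → (Fin k → ℝ) → ℝ≥0∞ := fun n x => ENNReal.ofReal ‖g n x‖ with hG
  set bound : (Fin k → ℝ) → ℝ≥0∞ := fun x => ENNReal.ofReal (A * C * (f x * δ x ξ)) with hbd
  -- finiteness of the bound
  have hbfin : ∫⁻ x, bound x ≠ ⊤ := by
    have h1 : ∀ x, bound x ≤ ENNReal.ofReal (A * C) * ‖f x * δ x ξ‖₊ := by
      intro x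
      rw [hbd]
      dsimp only
      rw [ENNReal.ofReal_mul (by positivity)]
      exact mul_le_mul_right (Real.ofReal_le_enorm _) _
    have h2 : ∫⁻ x, bound x ≤ ENNReal.ofReal (A * C) * ∫⁻ x, ‖f x * δ x ξ‖₊ := by
      rw [← lintegral_const_mul' _ _ ENNReal.ofReal_ne_top]
      exact lintegral_mono h1
    exact ne_top_of_le_ne_top
      (ENNReal.mul_ne_top ENNReal.ofReal_ne_top hint_f.2.ne) h2
  -- domination
  have hle : ∀ n, ∀ᵐ x ∂(volume : Measure (Fin k → ℝ)), G n x ≤ bound x := by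
    intro n
    obtain ⟨ht0, htε⟩ := hv_mem n
    filter_upwards [h_comp, hf_osc] with x hcomp hosc
    have hΦξpos := hΦξ (v n) ht0 htε
    have hcomp2 := (hcomp (v n) ht0 htε).2
    have hosc2 := hosc (v n) ht0 htε
    have hJnonneg : (0:ℝ) ≤ ∫ y in hball h x (v n), |f y - f x| :=
      integral_nonneg fun y => abs_nonneg _
    have hJ : |∫ y in hball h x (v n), (f y - f x)| ≤ ∫ y in hball h x (v n), |f y - f x| := by
      simpa [Real.norm_eq_abs] using
        norm_integral_le_integral_norm (μ := volume.restrict (hball h x (v n)))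
          (fun y => f y - f x)
    have hΦx_nonneg : (0:ℝ) ≤ Phi h x (v n) := Phi_nonneg h x (v n)
    have hΦx_le : Phi h x (v n) ≤ C * δ x ξ * Phi h ξ (v n) := by
      rw [div_le_iff₀ hΦξpos] at hcomp2
      linarith
    have habs : ‖g n x‖ ≤ A * C * (f x * δ x ξ) := by
      rw [hg]
      dsimp only
      rw [Real.norm_eq_abs, abs_mul, abs_div, abs_of_nonneg (hf_nonneg x),
        abs_of_pos hΦξpos]
      have hI : |∫ y in hball h x (v n), (f y - f x)| ≤ A * C * δ x ξ * Phi h ξ (v n) := by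
        calc |∫ y in hball h x (v n), (f y - f x)|
            ≤ ∫ y in hball h x (v n), |f y - f x| := hJ
          _ ≤ A * Phi h x (v n) := hosc2
          _ ≤ A * (C * δ x ξ * Phi h ξ (v n)) := by
              apply mul_le_mul_of_nonneg_left hΦx_le hA
          _ = A * C * δ x ξ * Phi h ξ (v n) := by ring
      have hdiv : |∫ y in hball h x (v n), (f y - f x)| / Phi h ξ (v n) ≤ A * C * δ x ξ := by
        rw [div_le_iff₀ hΦξpos]
        linarith
      calc f x * (|∫ y in hball h x (v n), (f y - f x)| / Phi h ξ (v n))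
          ≤ f x * (A * C * δ x ξ) :=
            mul_le_mul_of_nonneg_left hdiv (hf_nonneg x)
        _ = A * C * (f x * δ x ξ) := by ring
    calc G n x = ENNReal.ofReal ‖g n x‖ := rfl
      _ ≤ ENNReal.ofReal (A * C * (f x * δ x ξ)) := ENNReal.ofReal_le_ofReal habs
      _ = bound x := rfl
  -- pointwise limit
  have hlim : ∀ᵐ x ∂(volume : Measure (Fin k → ℝ)), Tendsto (fun n => G n x) atTop (nhds 0) := by
    filter_upwards [h_comp, h_posvol, hf_diff] with x hcomp hpos hdiff
    have hreal : Tendsto (fun n => ‖g n x‖) atTop (nhds 0) := by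
      have hw : Tendsto (fun n => (∫ y in hball h x (v n), |f y - f x|) / Phi h x (v n))
          atTop (nhds 0) := hdiff.comp hvtend
      have hbnd : ∀ n, ‖g n x‖ ≤
          (f x * (C * δ x ξ)) * ((∫ y in hball h x (v n), |f y - f x|) / Phi h x (v n)) := by
        intro n
        obtain ⟨ht0, htε⟩ := hv_mem n
        have hΦξpos := hΦξ (v n) ht0 htε
        have hΦxpos : 0 < Phi h x (v n) :=
          ENNReal.toReal_pos (hpos (v n) ht0 htε).1.ne' (hpos (v n) ht0 htε).2.ne
        have hcomp2 := (hcomp (v n) ht0 htε).2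
        have hJnonneg : (0:ℝ) ≤ ∫ y in hball h x (v n), |f y - f x| :=
          integral_nonneg fun y => abs_nonneg _
        have hJ : |∫ y in hball h x (v n), (f y - f x)| ≤
            ∫ y in hball h x (v n), |f y - f x| := by
          simpa [Real.norm_eq_abs] using
            norm_integral_le_integral_norm (μ := volume.restrict (hball h x (v n)))
              (fun y => f y - f x)
        rw [hg]
        dsimp only
        rw [Real.norm_eq_abs, abs_mul, abs_div, abs_of_nonneg (hf_nonneg x),
          abs_of_pos hΦξpos]
        have key : |∫ y in hball h x (v n), (f y - f x)| / Phi h ξ (v n) ≤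
            (C * δ x ξ) * ((∫ y in hball h x (v n), |f y - f x|) / Phi h x (v n)) := by
          have h1 : (∫ y in hball h x (v n), |f y - f x|) / Phi h ξ (v n) =
              ((∫ y in hball h x (v n), |f y - f x|) / Phi h x (v n)) *
                (Phi h x (v n) / Phi h ξ (v n)) := by
            field_simp
          have h2 : |∫ y in hball h x (v n), (f y - f x)| / Phi h ξ (v n) ≤
              (∫ y in hball h x (v n), |f y - f x|) / Phi h ξ (v n) :=
            div_le_div_of_nonneg_right hJ hΦξpos.le
          rw [h1] at h2
          calc |∫ y in hball h x (v n), (f y - f x)| / Phi h ξ (v n)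
              ≤ ((∫ y in hball h x (v n), |f y - f x|) / Phi h x (v n)) *
                (Phi h x (v n) / Phi h ξ (v n)) := h2
            _ ≤ ((∫ y in hball h x (v n), |f y - f x|) / Phi h x (v n)) * (C * δ x ξ) := by
                apply mul_le_mul_of_nonneg_left hcomp2 (by positivity)
            _ = (C * δ x ξ) * ((∫ y in hball h x (v n), |f y - f x|) / Phi h x (v n)) := by
                ring
        calc f x * (|∫ y in hball h x (v n), (f y - f x)| / Phi h ξ (v n))
            ≤ f x * ((C * δ x ξ) *
              ((∫ y in hball h x (v n), |f y - f x|) / Phi h x (v n))) :=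
              mul_le_mul_of_nonneg_left key (hf_nonneg x)
          _ = (f x * (C * δ x ξ)) *
              ((∫ y in hball h x (v n), |f y - f x|) / Phi h x (v n)) := by ring
      have hconst : Tendsto (fun n => (f x * (C * δ x ξ)) *
          ((∫ y in hball h x (v n), |f y - f x|) / Phi h x (v n))) atTop (nhds 0) := by
        simpa using hw.const_mul (f x * (C * δ x ξ))
      exact squeeze_zero (fun n => norm_nonneg _) hbnd hconst
    have : Tendsto (fun n => ENNReal.ofReal ‖g n x‖) atTop (nhds (ENNReal.ofReal 0)) :=
      (ENNReal.continuous_ofReal.tendsto 0).comp hreal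
    simpa [hG] using this
  -- apply the dominated convergence lemma for lintegral
  have hL : Tendsto (fun n => ∫⁻ x, G n x) atTop (nhds 0) :=
    aux_lintegral_tendsto G bound hbfin hle hlim
  have htoReal : Tendsto (fun n => (∫⁻ x, G n x).toReal) atTop (nhds 0) := by
    simpa [Function.comp_def] using (ENNReal.tendsto_toReal (by simp)).comp hL
  have hfinal : Tendsto (fun n => ∫ x, g n x) atTop (nhds 0) := by
    apply squeeze_zero_norm _ htoReal
    intro n
    simpa [hG] using norm_integral_le_lintegral_norm (g n)
  apply hfinal.congr'
  filter_upwards [huv] with n hn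
  simp only [Function.comp, hg]
  rw [hn]
end

section
/- Let d : ℝ^k × ℝ^k → [0,∞) be a continuous function such that d(x,y) = 0 iff x = y and d(ax+b, ay+b) = |a|·d(x,y) for all a ∈ ℝ and b, x, y ∈ ℝ^k. Let γ : [0,∞) → [0,∞) be continuous and strictly increasing with γ(0) = 0, and set h := γ ∘ d. Let f and g be square-integrable probability densities on ℝ^k with uniformly bounded centered oscillation with respect to h. Then f = g almost everywhere if and only if for every t > 0 one has F_XX(t) = F_YY(t) = F_XY(t). -/
open MeasureTheory Filter Set

section Aux

open scoped ENNReal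

variable {k : ℕ}

/-- Continuity of the autocorrelation-type function `z ↦ ∫ p x * q (x + z)`. -/
lemma corr_continuous (p q : (Fin k → ℝ) → ℝ)
    (hp : MemLp p 2 (volume : Measure (Fin k → ℝ)))
    (hq : MemLp q 2 (volume : Measure (Fin k → ℝ))) :
    Continuous (fun z : Fin k → ℝ => ∫ x, p x * q (x + z)) := by
  have hcm : Continuous fun z : Fin k → ℝ =>
      (⟨⟨fun x => x + z, by fun_prop⟩, measurePreserving_add_right volume z⟩ :
        {f : C(Fin k → ℝ, Fin k → ℝ) // MeasurePreserving f volume volume}) := by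
    refine Continuous.subtype_mk ?_ _
    exact ContinuousMap.continuous_of_continuous_uncurry _ (continuous_snd.add continuous_fst)
  have hT : Continuous fun z : Fin k → ℝ =>
      Lp.compMeasurePreserving (μ := (volume : Measure (Fin k → ℝ))) _
        (measurePreserving_add_right volume z) (hq.toLp q) := by
    exact (Lp.compMeasurePreserving_continuous (volume : Measure (Fin k → ℝ))
      (volume : Measure (Fin k → ℝ)) ℝ (p := 2) (by norm_num)).comp
      (Continuous.prodMk (continuous_const (y := hq.toLp q)) hcm)
  have key : ∀ z : Fin k → ℝ, (∫ x, p x * q (x + z)) =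
      @inner ℝ _ _ (hp.toLp p) (Lp.compMeasurePreserving _
        (measurePreserving_add_right volume z) (hq.toLp q)) := by
    intro z
    rw [L2.inner_def]
    refine integral_congr_ae ?_
    have h1 : (hp.toLp p : (Fin k → ℝ) → ℝ) =ᵐ[volume] p := hp.coeFn_toLp
    have h2 : (Lp.compMeasurePreserving _ (measurePreserving_add_right volume z) (hq.toLp q) :
        (Fin k → ℝ) → ℝ) =ᵐ[volume] fun x => q (x + z) := by
      refine (Lp.coeFn_compMeasurePreserving _ _).trans ?_
      exact (measurePreserving_add_right volume z).quasiMeasurePreserving.ae_eq_comp hq.coeFn_toLp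
    filter_upwards [h1, h2] with x hx1 hx2
    simp only [RCLike.inner_apply, conj_trivial, hx1, hx2]
    rw [mul_comm]
  simp_rw [key]
  exact Continuous.inner continuous_const hT

/-- Fubini representation of the double integral over a translated set. -/
lemma key_rep (p q : (Fin k → ℝ) → ℝ) (hpm : Measurable p) (hqm : Measurable q)
    (hp : Integrable p (volume : Measure (Fin k → ℝ)))
    (hq : Integrable q (volume : Measure (Fin k → ℝ)))
    (W : Set (Fin k → ℝ)) :
    ∫ x, p x * ∫ y in {y | y - x ∈ W}, q y = ∫ z in W, ∫ x, p x * q (x + z) := by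
  have step1 : ∀ x : Fin k → ℝ, (∫ y in {y | y - x ∈ W}, q y) = ∫ z in W, q (x + z) := by
    intro x
    have himg : (fun z => x + z) '' W = {y | y - x ∈ W} := by
      ext y; simp only [mem_image, mem_setOf_eq]
      constructor
      · rintro ⟨z, hz, rfl⟩; simpa using hz
      · intro hy; exact ⟨y - x, hy, by abel⟩
    rw [← himg,
      (measurePreserving_add_left volume x).setIntegral_image_emb
        (Homeomorph.measurableEmbedding (Homeomorph.addLeft x)) _ _]
  simp_rw [step1]
  have step2 : ∀ x : Fin k → ℝ, p x * (∫ z in W, q (x + z)) = ∫ z in W, p x * q (x + z) := by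
    intro x; rw [integral_const_mul]
  simp_rw [step2]
  have hmeas : AEStronglyMeasurable (Function.uncurry fun x z => p x * q (x + z))
      ((volume : Measure (Fin k → ℝ)).prod ((volume : Measure (Fin k → ℝ)).restrict W)) := by
    apply Measurable.aestronglyMeasurable
    exact (hpm.comp measurable_fst).mul (hqm.comp (measurable_fst.add measurable_snd))
  have hqx : ∀ x : Fin k → ℝ, Integrable (fun z => q (x + z)) (volume : Measure (Fin k → ℝ)) := by
    intro x
    exact (measurePreserving_add_left volume x).integrable_comp hq.aestronglyMeasurable |>.2 hq
  have hint : Integrable (Function.uncurry fun x z => p x * q (x + z))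
      ((volume : Measure (Fin k → ℝ)).prod ((volume : Measure (Fin k → ℝ)).restrict W)) := by
    rw [integrable_prod_iff hmeas]
    constructor
    · refine Eventually.of_forall fun x => ?_
      exact (((hqx x).restrict (s := W)).const_mul (p x))
    · have hbd : ∀ x : Fin k → ℝ, (∫ z in W, ‖p x * q (x + z)‖) ≤ ‖p x‖ * ∫ z, ‖q z‖ := by
        intro x
        have h1 : (∫ z in W, ‖p x * q (x + z)‖) = ‖p x‖ * ∫ z in W, ‖q (x + z)‖ := by
          simp_rw [norm_mul]; rw [integral_const_mul]
        rw [h1]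
        refine mul_le_mul_of_nonneg_left ?_ (norm_nonneg _)
        have h2 : (∫ z in W, ‖q (x + z)‖) ≤ ∫ z, ‖q (x + z)‖ :=
          setIntegral_le_integral (hqx x).norm (Eventually.of_forall fun z => norm_nonneg _)
        calc (∫ z in W, ‖q (x + z)‖) ≤ ∫ z, ‖q (x + z)‖ := h2
          _ = ∫ z, ‖q z‖ :=
              (measurePreserving_add_left volume x).integral_comp
                (Homeomorph.measurableEmbedding (Homeomorph.addLeft x)) (fun y => ‖q y‖)
      refine Integrable.mono' (hp.norm.mul_const (∫ z, ‖q z‖)) ?_ ?_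
      · exact (hmeas.norm.integral_prod_right').congr (Eventually.of_forall fun x => rfl)
      · refine Eventually.of_forall fun x => ?_
        have hnn : 0 ≤ ∫ z in W, ‖p x * q (x + z)‖ :=
          integral_nonneg fun z => norm_nonneg _
        simp only [Function.uncurry_apply_pair]
        rw [Real.norm_of_nonneg hnn]
        exact hbd x
  exact integral_integral_swap hint

/-- Integral over a symmetric set is invariant under negation of the argument. -/
lemma setIntegral_neg_symm (W : Set (Fin k → ℝ)) (hWm : MeasurableSet W)
    (hWs : ∀ z, z ∈ W ↔ -z ∈ W) (F : (Fin k → ℝ) → ℝ) :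
    ∫ z in W, F (-z) = ∫ z in W, F z := by
  have h1 : ∫ z in W, F (-z) = ∫ z, W.indicator (fun z => F (-z)) z := by
    rw [integral_indicator hWm]
  have h2 : (fun z => W.indicator (fun z => F (-z)) z) = fun z => (W.indicator F) (-z) := by
    funext z
    by_cases hz : z ∈ W
    · rw [indicator_of_mem hz, indicator_of_mem ((hWs z).mp hz)]
    · have hz' : -z ∉ W := fun hc => hz (by simpa using (hWs (-z)).mp hc)
      rw [indicator_of_notMem hz, indicator_of_notMem hz']
  rw [h1, h2, integral_neg_eq_self, ← integral_indicator hWm]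

end Aux

theorem identifiability_monotone_transform {k : ℕ}
    (d : (Fin k → ℝ) → (Fin k → ℝ) → ℝ)
    (hd_cont : Continuous (fun p : (Fin k → ℝ) × (Fin k → ℝ) => d p.1 p.2))
    (hd_nonneg : ∀ x y, 0 ≤ d x y)
    (hd_zero : ∀ x y, d x y = 0 ↔ x = y)
    (hd_hom : ∀ (a : ℝ) (b x y : Fin k → ℝ), d (a • x + b) (a • y + b) = |a| * d x y)
    -- γ : [0,∞) → [0,∞) continuous, strictly increasing, γ(0) = 0
    (γ : ℝ → ℝ)
    (hγ_cont : ContinuousOn γ (Ici 0))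
    (hγ_mono : StrictMonoOn γ (Ici 0))
    (hγ_nonneg : ∀ s, 0 ≤ s → 0 ≤ γ s)
    (hγ_zero : γ 0 = 0)
    -- h := γ ∘ d
    (h : (Fin k → ℝ) → (Fin k → ℝ) → ℝ)
    (hh : h = fun x y => γ (d x y))
    -- f and g are square-integrable probability densities on ℝ^k
    (f g : (Fin k → ℝ) → ℝ)
    (hf_meas : Measurable f) (hg_meas : Measurable g)
    (hf_nonneg : ∀ x, 0 ≤ f x) (hg_nonneg : ∀ x, 0 ≤ g x)
    (hf_prob : ∫ x, f x = 1) (hg_prob : ∫ x, g x = 1)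
    (hf_sq : MemLp f 2 volume) (hg_sq : MemLp g 2 volume)
    -- uniformly bounded centered oscillation with respect to h
    (ε₀ A : ℝ) (hε₀ : 0 < ε₀)
    (hf_osc : ∀ᵐ x ∂(volume : Measure (Fin k → ℝ)), ∀ t, 0 < t → t < ε₀ →
      (∫ y in hball h x t, |f y - f x|) ≤ A * Phi h x t)
    (hg_osc : ∀ᵐ x ∂(volume : Measure (Fin k → ℝ)), ∀ t, 0 < t → t < ε₀ →
      (∫ y in hball h x t, |g y - g x|) ≤ A * Phi h x t) :
    (f =ᵐ[volume] g) ↔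
      (∀ t, 0 < t →
        (∫ x, f x * ∫ y in hball h x t, f y) = (∫ x, f x * ∫ y in hball h x t, g y) ∧
        (∫ x, g x * ∫ y in hball h x t, g y) = (∫ x, f x * ∫ y in hball h x t, g y)) := by
  constructor
  · -- easy direction
    intro hfg t ht
    have hinner : ∀ x, (∫ y in hball h x t, f y) = ∫ y in hball h x t, g y :=
      fun x => integral_congr_ae (ae_restrict_of_ae hfg)
    constructor
    · have : (fun x => f x * ∫ y in hball h x t, f y)
          = fun x => f x * ∫ y in hball h x t, g y := funext fun x => by rw [hinner x]
      rw [this]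
    · refine integral_congr_ae ?_
      filter_upwards [hfg] with x hx
      rw [hx]
  · -- hard direction
    intro hH
    -- basic geometry of the distance d
    have gcont : Continuous fun z : Fin k → ℝ => d z 0 :=
      hd_cont.comp (continuous_id.prodMk continuous_const)
    have hd_sub : ∀ x y : Fin k → ℝ, d x y = d (x - y) 0 := by
      intro x y
      have := hd_hom 1 y (x - y) 0
      simpa [sub_add_cancel] using this
    have hd_negg : ∀ z : Fin k → ℝ, d (-z) 0 = d z 0 := by
      intro z
      have := hd_hom (-1) 0 z 0
      simpa [neg_one_smul] using this
    have hd00 : d (0 : Fin k → ℝ) 0 = 0 := (hd_zero 0 0).mpr rfl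
    set W : ℝ → Set (Fin k → ℝ) := fun t => {z | γ (d z 0) < t} with hWdef
    have hγd_cont : Continuous fun z : Fin k → ℝ => γ (d z 0) :=
      hγ_cont.comp_continuous gcont (fun z => hd_nonneg z 0)
    have hW_open : ∀ t, IsOpen (W t) := fun t => isOpen_lt hγd_cont continuous_const
    have hW_meas : ∀ t, MeasurableSet (W t) := fun t => (hW_open t).measurableSet
    have hW_symm : ∀ t z, z ∈ W t ↔ -z ∈ W t := by
      intro t z
      simp only [hWdef, mem_setOf_eq, hd_negg]
    have hball_eq : ∀ x t, hball h x t = {y | y - x ∈ W t} := by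
      intro x t
      ext y
      simp only [hball, mem_setOf_eq, hWdef, hh]
      rw [hd_sub x y, show x - y = -(y - x) by abel, hd_negg]
    have hzero_mem : ∀ t, 0 < t → (0 : Fin k → ℝ) ∈ W t := by
      intro t ht
      simp only [hWdef, mem_setOf_eq, hd00, hγ_zero]
      exact ht
    -- integrability of the densities
    have hf_int : Integrable f (volume : Measure (Fin k → ℝ)) := by
      by_contra hc
      rw [integral_undef hc] at hf_prob
      norm_num at hf_prob
    have hg_int : Integrable g (volume : Measure (Fin k → ℝ)) := by
      by_contra hc
      rw [integral_undef hc] at hg_prob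
      norm_num at hg_prob
    -- shrinking of the balls
    have hshrink : ∀ ε : ℝ, 0 < ε → ∃ r : ℝ, 0 < r ∧
        ∀ z : Fin k → ℝ, d z 0 < r → dist z 0 < ε := by
      intro ε hε
      by_cases hk : ∀ z : Fin k → ℝ, z = 0
      · exact ⟨1, one_pos, fun z _ => by rw [hk z]; simpa using hε⟩
      · push_neg at hk
        obtain ⟨z₀, hz₀⟩ := hk
        haveI : Nontrivial (Fin k → ℝ) := ⟨⟨z₀, 0, hz₀⟩⟩
        have hsne : (Metric.sphere (0 : Fin k → ℝ) ε).Nonempty :=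
          NormedSpace.sphere_nonempty.2 hε.le
        obtain ⟨z₁, hz₁mem, hz₁min⟩ :=
          (isCompact_sphere (0 : Fin k → ℝ) ε).exists_isMinOn hsne gcont.continuousOn
        have hz₁ne : z₁ ≠ 0 := by
          intro hc
          rw [hc] at hz₁mem
          simp only [Metric.mem_sphere, dist_self] at hz₁mem
          exact hε.ne hz₁mem
        have hr : 0 < d z₁ 0 :=
          lt_of_le_of_ne (hd_nonneg z₁ 0) (fun hc => hz₁ne ((hd_zero z₁ 0).mp hc.symm))
        refine ⟨d z₁ 0, hr, fun z hz => ?_⟩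
        by_contra hc
        push_neg at hc
        have hznorm : ε ≤ ‖z‖ := by simpa [dist_zero_right] using hc
        have hzpos : 0 < ‖z‖ := lt_of_lt_of_le hε hznorm
        set c : ℝ := ε / ‖z‖ with hcdef
        have hc0 : 0 < c := div_pos hε hzpos
        have hc1 : c ≤ 1 := (div_le_one hzpos).mpr hznorm
        have hmem : c • z ∈ Metric.sphere (0 : Fin k → ℝ) ε := by
          simp only [Metric.mem_sphere, dist_zero_right, norm_smul, Real.norm_eq_abs,
            abs_of_pos hc0, hcdef, abs_of_pos (div_pos hε hzpos)]
          field_simp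
        have hcz : d (c • z) 0 = c * d z 0 := by
          have := hd_hom c 0 z 0
          simpa [abs_of_pos hc0] using this
        have h1 : d z₁ 0 ≤ d (c • z) 0 := hz₁min hmem
        have h2 : d (c • z) 0 ≤ d z 0 := by
          rw [hcz]
          calc c * d z 0 ≤ 1 * d z 0 :=
                mul_le_mul_of_nonneg_right hc1 (hd_nonneg z 0)
            _ = d z 0 := one_mul _
        linarith
    have hWsub : ∀ ε : ℝ, 0 < ε → ∃ t : ℝ, 0 < t ∧ W t ⊆ Metric.ball (0 : Fin k → ℝ) ε := by
      intro ε hε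
      obtain ⟨r, hr, hrsub⟩ := hshrink ε hε
      refine ⟨γ r, ?_, ?_⟩
      · rw [← hγ_zero]
        exact hγ_mono (self_mem_Ici) (le_of_lt hr) hr
      · intro z hz
        simp only [hWdef, mem_setOf_eq] at hz
        rw [Metric.mem_ball]
        refine hrsub z ?_
        by_contra hc
        push_neg at hc
        exact absurd hz (not_lt.mpr (hγ_mono.monotoneOn (mem_Ici.mpr hr.le)
          (mem_Ici.mpr (hd_nonneg z 0)) hc))
    -- the difference and its autocorrelation
    set φ : (Fin k → ℝ) → ℝ := fun x => f x - g x with hφdef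
    have hφ2 : MemLp φ 2 (volume : Measure (Fin k → ℝ)) := hf_sq.sub hg_sq
    have hmem_tr : ∀ (q : (Fin k → ℝ) → ℝ), MemLp q 2 (volume : Measure (Fin k → ℝ)) →
        ∀ z : Fin k → ℝ, MemLp (fun x => q (x + z)) 2 (volume : Measure (Fin k → ℝ)) :=
      fun q hq z => hq.comp_measurePreserving (measurePreserving_add_right volume z)
    have hprod_int : ∀ (p q : (Fin k → ℝ) → ℝ),
        MemLp p 2 (volume : Measure (Fin k → ℝ)) →
        MemLp q 2 (volume : Measure (Fin k → ℝ)) →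
        Integrable (fun x => p x * q x) (volume : Measure (Fin k → ℝ)) := by
      intro p q hp hq
      have := hq.smul (φ := p) hp (r := 1)
      rw [memLp_one_iff_integrable] at this
      exact this.congr (Eventually.of_forall fun x => by simp [smul_eq_mul])
    set S : (Fin k → ℝ) → ℝ := fun z => ∫ x, φ x * φ (x + z) with hSdef
    have hS_cont : Continuous S := corr_continuous φ φ hφ2 hφ2
    set V : ℝ := ∫ x, φ x * φ x with hVdef
    have hS0 : S 0 = V := by
      simp only [hSdef, hVdef, add_zero]
    have hV_nonneg : 0 ≤ V := integral_nonneg fun x => mul_self_nonneg _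
    -- main claim : V = 0
    have hVzero : V = 0 := by
      by_contra hVne
      have hVpos : 0 < V := lt_of_le_of_ne hV_nonneg (Ne.symm hVne)
      have hev : ∀ᶠ z in nhds (0 : Fin k → ℝ), V / 2 < S z :=
        (hS_cont.continuousAt (x := (0 : Fin k → ℝ))).eventually
          (eventually_gt_nhds (by rw [hS0]; linarith))
      obtain ⟨δ, hδpos, hδ⟩ := Metric.eventually_nhds_iff_ball.mp hev
      obtain ⟨t, ht, hsub⟩ := hWsub δ hδpos
      have hsub' : W t ⊆ Metric.closedBall (0 : Fin k → ℝ) δ :=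
        hsub.trans Metric.ball_subset_closedBall
      have hWfin : volume (W t) < ⊤ :=
        lt_of_le_of_lt (measure_mono hsub') measure_closedBall_lt_top
      have hWpos : 0 < volume (W t) := (hW_open t).measure_pos volume ⟨0, hzero_mem t ht⟩
      have hio : ∀ F : (Fin k → ℝ) → ℝ, Continuous F → IntegrableOn F (W t) volume := by
        intro F hF
        exact (hF.continuousOn.integrableOn_compact
          (isCompact_closedBall (0 : Fin k → ℝ) δ)).mono_set hsub'
      obtain ⟨e1, e2⟩ := hH t ht
      have kff : (∫ x, f x * ∫ y in hball h x t, f y) = ∫ z in W t, ∫ x, f x * f (x + z) := by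
        simp_rw [hball_eq]
        exact key_rep f f hf_meas hf_meas hf_int hf_int (W t)
      have kfg : (∫ x, f x * ∫ y in hball h x t, g y) = ∫ z in W t, ∫ x, f x * g (x + z) := by
        simp_rw [hball_eq]
        exact key_rep f g hf_meas hg_meas hf_int hg_int (W t)
      have kgg : (∫ x, g x * ∫ y in hball h x t, g y) = ∫ z in W t, ∫ x, g x * g (x + z) := by
        simp_rw [hball_eq]
        exact key_rep g g hg_meas hg_meas hg_int hg_int (W t)
      have hswap_pt : ∀ z : Fin k → ℝ,
          (∫ x, g x * f (x + z)) = (fun w : Fin k → ℝ => ∫ x, f x * g (x + w)) (-z) := by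
        intro z
        have e : ∫ x, (fun w => g w * f (w + z)) (x - z) = ∫ x, g x * f (x + z) :=
          integral_sub_right_eq_self (fun w => g w * f (w + z)) z
        calc (∫ x, g x * f (x + z)) = ∫ x, g (x - z) * f (x - z + z) := e.symm
          _ = (fun w : Fin k → ℝ => ∫ x, f x * g (x + w)) (-z) := by
              simp only
              congr 1
              funext x
              rw [sub_add_cancel, mul_comm, sub_eq_add_neg]
      have hswap : (∫ z in W t, ∫ x, g x * f (x + z)) = ∫ z in W t, ∫ x, f x * g (x + z) := by
        calc (∫ z in W t, ∫ x, g x * f (x + z))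
            = ∫ z in W t, (fun w : Fin k → ℝ => ∫ x, f x * g (x + w)) (-z) :=
              setIntegral_congr_fun (hW_meas t) fun z _ => hswap_pt z
          _ = ∫ z in W t, ∫ x, f x * g (x + z) :=
              setIntegral_neg_symm (W t) (hW_meas t) (hW_symm t)
                (fun w => ∫ x, f x * g (x + w))
      have hexp : ∀ z : Fin k → ℝ, S z =
          (∫ x, f x * f (x + z)) - (∫ x, f x * g (x + z)) -
            (∫ x, g x * f (x + z)) + (∫ x, g x * g (x + z)) := by
        intro z
        have i1 : Integrable (fun x => f x * f (x + z)) (volume : Measure (Fin k → ℝ)) :=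
          hprod_int _ _ hf_sq (hmem_tr f hf_sq z)
        have i2 : Integrable (fun x => f x * g (x + z)) (volume : Measure (Fin k → ℝ)) :=
          hprod_int _ _ hf_sq (hmem_tr g hg_sq z)
        have i3 : Integrable (fun x => g x * f (x + z)) (volume : Measure (Fin k → ℝ)) :=
          hprod_int _ _ hg_sq (hmem_tr f hf_sq z)
        have i4 : Integrable (fun x => g x * g (x + z)) (volume : Measure (Fin k → ℝ)) :=
          hprod_int _ _ hg_sq (hmem_tr g hg_sq z)
        have hfun : (fun x => φ x * φ (x + z)) = fun x =>
            (f x * f (x + z) - f x * g (x + z)) - (g x * f (x + z) - g x * g (x + z)) :=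
          funext fun x => by simp only [hφdef]; ring
        have e12 : (∫ x, (f x * f (x + z) - f x * g (x + z))) =
            (∫ x, f x * f (x + z)) - ∫ x, f x * g (x + z) := integral_sub i1 i2
        have e34 : (∫ x, (g x * f (x + z) - g x * g (x + z))) =
            (∫ x, g x * f (x + z)) - ∫ x, g x * g (x + z) := integral_sub i3 i4
        have e0 : (∫ x, ((f x * f (x + z) - f x * g (x + z)) -
              (g x * f (x + z) - g x * g (x + z)))) =
            (∫ x, (f x * f (x + z) - f x * g (x + z))) -
              ∫ x, (g x * f (x + z) - g x * g (x + z)) := integral_sub (i1.sub i2) (i3.sub i4)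
        simp only [hSdef]
        rw [hfun, e0, e12, e34]
        ring
      have hcff := hio _ (corr_continuous f f hf_sq hf_sq)
      have hcfg := hio _ (corr_continuous f g hf_sq hg_sq)
      have hcgf := hio _ (corr_continuous g f hg_sq hf_sq)
      have hcgg := hio _ (corr_continuous g g hg_sq hg_sq)
      have hSint_zero : ∫ z in W t, S z = 0 := by
        have s1 : (∫ z in W t, ((∫ x, f x * f (x + z)) - (∫ x, f x * g (x + z)))) =
            (∫ z in W t, ∫ x, f x * f (x + z)) - ∫ z in W t, ∫ x, f x * g (x + z) :=
          integral_sub hcff hcfg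
        have s2 : (∫ z in W t, (((∫ x, f x * f (x + z)) - (∫ x, f x * g (x + z))) -
              (∫ x, g x * f (x + z)))) =
            (∫ z in W t, ((∫ x, f x * f (x + z)) - (∫ x, f x * g (x + z)))) -
              ∫ z in W t, (∫ x, g x * f (x + z)) := integral_sub (hcff.sub hcfg) hcgf
        have s3 : (∫ z in W t, ((((∫ x, f x * f (x + z)) - (∫ x, f x * g (x + z))) -
              (∫ x, g x * f (x + z))) + (∫ x, g x * g (x + z)))) =
            (∫ z in W t, (((∫ x, f x * f (x + z)) - (∫ x, f x * g (x + z))) -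
              (∫ x, g x * f (x + z)))) + ∫ z in W t, (∫ x, g x * g (x + z)) :=
          integral_add ((hcff.sub hcfg).sub hcgf) hcgg
        have step : ∫ z in W t, S z =
            ((∫ z in W t, ∫ x, f x * f (x + z)) - (∫ z in W t, ∫ x, f x * g (x + z)) -
              (∫ z in W t, ∫ x, g x * f (x + z))) + ∫ z in W t, ∫ x, g x * g (x + z) := by
          rw [setIntegral_congr_fun (hW_meas t) fun z _ => hexp z, s3, s2, s1]
        rw [step, hswap, ← kff, ← kfg, ← kgg]
        linarith [e1, e2]
      have hSW : IntegrableOn S (W t) volume := hio S hS_cont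
      have hconst : IntegrableOn (fun _ => V / 2 : (Fin k → ℝ) → ℝ) (W t) volume :=
        integrableOn_const hWfin.ne
      have hlow : (∫ _ in W t, (V / 2 : ℝ)) ≤ ∫ z in W t, S z :=
        setIntegral_mono_on hconst hSW (hW_meas t) (fun z hz => (hδ z (hsub hz)).le)
      rw [setIntegral_const, hSint_zero, smul_eq_mul, measureReal_def] at hlow
      have htoRpos : 0 < (volume (W t)).toReal := ENNReal.toReal_pos hWpos.ne' hWfin.ne
      nlinarith [hlow, htoRpos, hVpos]
    -- conclude `f =ᵐ g` from `V = 0`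
    have hφ_int : Integrable (fun x => φ x * φ x) (volume : Measure (Fin k → ℝ)) :=
      hprod_int φ φ hφ2 hφ2
    have := (integral_eq_zero_iff_of_nonneg (fun x => mul_self_nonneg (φ x)) hφ_int).mp hVzero
    filter_upwards [this] with x hx
    have : φ x = 0 := mul_self_eq_zero.mp hx
    simpa [hφdef, sub_eq_zero] using this
end

section
/- Let (M, d) be a compact metric space equipped with a Borel measure μ, and suppose there exist k ∈ ℕ, constants 0 < c ≤ C and ε > 0 such that c·t^k ≤ μ(B_t(x)) ≤ C·t^k for every x ∈ M and every 0 < t < ε, where B_t(x) is the open d-ball of radius t around x. Let f, g ∈ L²(μ) be probability densities with respect to μ. If for every t > 0 one has ∫∫_{{d(x,y)<t}} f(x)f(y) dμ(x)dμ(y) = ∫∫_{{d(x,y)<t}} g(x)g(y) dμ(x)dμ(y) = ∫∫_{{d(x,y)<t}} f(x)g(y) dμ(x)dμ(y), then f = g μ-almost everywhere. -/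
open MeasureTheory Filter Set

namespace IdentAux

variable {M : Type*} [MetricSpace M] [SecondCountableTopology M] [MeasurableSpace M]
  [BorelSpace M]

/-- The open "near-diagonal" set. -/
def S (M : Type*) [MetricSpace M] (t : ℝ) : Set (M × M) := {p : M × M | dist p.1 p.2 < t}

lemma measurableSet_S (t : ℝ) : MeasurableSet (S M t) :=
  (isOpen_lt continuous_dist continuous_const).measurableSet

lemma mem_S_iff {t : ℝ} {p : M × M} : p ∈ S M t ↔ dist p.1 p.2 < t := Iff.rfl

variable (μ : Measure M) [IsFiniteMeasure μ]

lemma double_eq (φ ψ : M → ℝ) (hφ : Integrable φ μ) (hψ : Integrable ψ μ) (t : ℝ) :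
    (∫ x, φ x * ∫ y in Metric.ball x t, ψ y ∂μ ∂μ)
      = ∫ p in S M t, φ p.1 * ψ p.2 ∂(μ.prod μ) := by
  have hS := measurableSet_S (M := M) t
  have hint : Integrable (fun p : M × M => φ p.1 * ψ p.2) (μ.prod μ) := hφ.mul_prod hψ
  rw [← integral_indicator hS, integral_prod _ (hint.indicator hS)]
  refine integral_congr_ae (Eventually.of_forall fun x => ?_)
  have hfun : ∀ y : M, (S M t).indicator (fun p : M × M => φ p.1 * ψ p.2) (x, y)
      = (Metric.ball x t).indicator (fun y => φ x * ψ y) y := by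
    intro y
    by_cases h : dist x y < t
    · rw [Set.indicator_of_mem (mem_S_iff.mpr h),
        Set.indicator_of_mem (by simpa [Metric.mem_ball, dist_comm] using h)]
    · rw [Set.indicator_of_notMem (fun hc => h (mem_S_iff.mp hc)),
        Set.indicator_of_notMem (by simpa [Metric.mem_ball, dist_comm] using h)]
  simp_rw [hfun]
  rw [integral_indicator Metric.isOpen_ball.measurableSet, integral_const_mul]

lemma swap_setIntegral (G : M × M → ℝ) (t : ℝ) :
    (∫ p in S M t, G (p.2, p.1) ∂(μ.prod μ)) = ∫ p in S M t, G p ∂(μ.prod μ) := by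
  have hS := measurableSet_S (M := M) t
  rw [← integral_indicator hS, ← integral_indicator hS,
    ← integral_prod_swap ((S M t).indicator G)]
  refine integral_congr_ae (Eventually.of_forall fun z => ?_)
  show (S M t).indicator (fun p : M × M => G (p.2, p.1)) z = (S M t).indicator G (z.2, z.1)
  by_cases h : dist z.1 z.2 < t
  · rw [Set.indicator_of_mem (mem_S_iff.mpr h),
      Set.indicator_of_mem (mem_S_iff.mpr (show dist z.2 z.1 < t by
        rwa [dist_comm]))]
  · rw [Set.indicator_of_notMem (fun hc => h (mem_S_iff.mp hc)),
      Set.indicator_of_notMem (fun hc => h (show dist z.1 z.2 < t by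
        have := mem_S_iff.mp hc; rwa [dist_comm] at this))]

lemma fst_eq (w : M → ℝ) (hw : Integrable w μ) (t : ℝ) :
    (∫ p in S M t, w p.1 ∂(μ.prod μ)) = ∫ x, w x * (μ (Metric.ball x t)).toReal ∂μ := by
  have := double_eq μ w (fun _ => (1 : ℝ)) hw (integrable_const 1) t
  simp only [mul_one, setIntegral_const, smul_eq_mul] at this
  exact this.symm

lemma measurable_ball_toReal (t : ℝ) :
    Measurable fun x : M => (μ (Metric.ball x t)).toReal := by
  have h1 : Measurable fun x : M => μ (Prod.mk x ⁻¹' S M t) :=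
    measurable_measure_prodMk_left (measurableSet_S t)
  have h2 : ∀ x : M, Prod.mk x ⁻¹' S M t = Metric.ball x t := by
    intro x; ext y; simp [S, Metric.mem_ball, dist_comm]
  simp_rw [h2] at h1
  exact h1.ennreal_toReal

lemma integrable_mul_ball (w : M → ℝ) (hw : Integrable w μ) (t : ℝ) :
    Integrable (fun x => w x * (μ (Metric.ball x t)).toReal) μ := by
  refine Integrable.mono' (hw.abs.mul_const (μ Set.univ).toReal)
    (hw.aestronglyMeasurable.mul (measurable_ball_toReal μ t).aestronglyMeasurable)
    (Eventually.of_forall fun x => ?_)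
  have hb : (μ (Metric.ball x t)).toReal ≤ (μ Set.univ).toReal :=
    ENNReal.toReal_mono (measure_ne_top μ _) (measure_mono (subset_univ _))
  have hb0 : 0 ≤ (μ (Metric.ball x t)).toReal := ENNReal.toReal_nonneg
  rw [Real.norm_eq_abs, abs_mul, abs_of_nonneg hb0]
  exact mul_le_mul_of_nonneg_left hb (abs_nonneg _)

lemma integrable_fst_sq (w : M → ℝ) (hw2 : Integrable (fun x => w x ^ 2) μ) :
    Integrable (fun p : M × M => w p.1 ^ 2) (μ.prod μ) := by
  simpa using hw2.mul_prod (integrable_const (1 : ℝ))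

lemma integrable_snd_sq (w : M → ℝ) (hw2 : Integrable (fun x => w x ^ 2) μ) :
    Integrable (fun p : M × M => w p.2 ^ 2) (μ.prod μ) := by
  simpa using (integrable_const (1 : ℝ)).mul_prod hw2

end IdentAux

open IdentAux

set_option maxHeartbeats 1000000 in
theorem identifiability_compact_metric_space
    {M : Type*} [MetricSpace M] [CompactSpace M]
    [MeasurableSpace M] [BorelSpace M] (μ : Measure M)
    (k : ℕ) (c C ε : ℝ) (hc : 0 < c) (hcC : c ≤ C) (hε : 0 < ε)
    (hvol : ∀ (x : M) (t : ℝ), 0 < t → t < ε →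
      ENNReal.ofReal (c * t ^ k) ≤ μ (Metric.ball x t) ∧
        μ (Metric.ball x t) ≤ ENNReal.ofReal (C * t ^ k))
    -- f and g are probability densities in L²(μ)
    (f g : M → ℝ)
    (hf_meas : Measurable f) (hg_meas : Measurable g)
    (hf_nonneg : ∀ x, 0 ≤ f x) (hg_nonneg : ∀ x, 0 ≤ g x)
    (hf_prob : ∫ x, f x ∂μ = 1) (hg_prob : ∫ x, g x ∂μ = 1)
    (hf_sq : MemLp f 2 μ) (hg_sq : MemLp g 2 μ)
    -- equality of the three interpoint distance distribution functions
    (heq : ∀ t : ℝ, 0 < t →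
      (∫ x, f x * ∫ y in Metric.ball x t, f y ∂μ ∂μ) =
        (∫ x, f x * ∫ y in Metric.ball x t, g y ∂μ ∂μ) ∧
      (∫ x, g x * ∫ y in Metric.ball x t, g y ∂μ ∂μ) =
        (∫ x, f x * ∫ y in Metric.ball x t, g y ∂μ ∂μ)) :
    f =ᵐ[μ] g := by
  classical
  haveI : SecondCountableTopology M := inferInstance
  have hC : 0 < C := lt_of_lt_of_le hc hcC
  -- μ is a finite measure
  have hε2 : 0 < ε / 2 := by linarith
  haveI : IsLocallyFiniteMeasure μ :=
    ⟨fun x => ⟨Metric.ball x (ε / 2), Metric.ball_mem_nhds x hε2,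
      lt_of_le_of_lt (hvol x (ε / 2) hε2 (by linarith)).2 ENNReal.ofReal_lt_top⟩⟩
  haveI : IsFiniteMeasure μ := ⟨by simpa using isCompact_univ.measure_lt_top⟩
  set h : M → ℝ := fun x => f x - g x with hh_def
  have hf_int : Integrable f μ := hf_sq.integrable one_le_two
  have hg_int : Integrable g μ := hg_sq.integrable one_le_two
  have hh_int : Integrable h μ := hf_int.sub hg_int
  have hh_mem : MemLp h 2 μ := by
    have := hf_sq.sub hg_sq
    simpa [hh_def, Pi.sub_def] using this
  have hh2 : Integrable (fun x => h x ^ 2) μ := hh_mem.integrable_sq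
  -- The key vanishing: ∫∫_{d<t} h⊗h = 0
  have hJ : ∀ t : ℝ, 0 < t → (∫ p in S M t, h p.1 * h p.2 ∂(μ.prod μ)) = 0 := by
    intro t ht
    have e1 := (heq t ht).1
    have e2 := (heq t ht).2
    rw [double_eq μ f f hf_int hf_int t, double_eq μ f g hf_int hg_int t] at e1
    rw [double_eq μ g g hg_int hg_int t, double_eq μ f g hf_int hg_int t] at e2
    have eswap : (∫ p in S M t, g p.1 * f p.2 ∂(μ.prod μ))
        = ∫ p in S M t, f p.1 * g p.2 ∂(μ.prod μ) := by
      have := swap_setIntegral μ (fun p : M × M => f p.1 * g p.2) t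
      simpa [mul_comm] using this
    have iff' : IntegrableOn (fun p : M × M => f p.1 * f p.2) (S M t) (μ.prod μ) :=
      (hf_int.mul_prod hf_int).integrableOn
    have ifg : IntegrableOn (fun p : M × M => f p.1 * g p.2) (S M t) (μ.prod μ) :=
      (hf_int.mul_prod hg_int).integrableOn
    have igf : IntegrableOn (fun p : M × M => g p.1 * f p.2) (S M t) (μ.prod μ) :=
      (hg_int.mul_prod hf_int).integrableOn
    have igg : IntegrableOn (fun p : M × M => g p.1 * g p.2) (S M t) (μ.prod μ) :=
      (hg_int.mul_prod hg_int).integrableOn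
    have expand : (∫ p in S M t, h p.1 * h p.2 ∂(μ.prod μ))
        = (∫ p in S M t, f p.1 * f p.2 ∂(μ.prod μ))
          - (∫ p in S M t, f p.1 * g p.2 ∂(μ.prod μ))
          - (∫ p in S M t, g p.1 * f p.2 ∂(μ.prod μ))
          + ∫ p in S M t, g p.1 * g p.2 ∂(μ.prod μ) := by
      have i1 : IntegrableOn (fun p : M × M => f p.1 * f p.2 - f p.1 * g p.2)
          (S M t) (μ.prod μ) := iff'.sub ifg
      have i2 : IntegrableOn (fun p : M × M => f p.1 * f p.2 - f p.1 * g p.2 - g p.1 * f p.2)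
          (S M t) (μ.prod μ) := i1.sub igf
      rw [← integral_sub iff' ifg, ← integral_sub i1 igf, ← integral_add i2 igg]
      refine integral_congr_ae (Eventually.of_forall fun p => ?_)
      simp only [hh_def]; ring
    rw [expand, e1, e2, eswap]; ring
  -- core inequality for a continuous approximant
  have core : ∀ u : M → ℝ, Continuous u → MemLp (u : M → ℝ) 2 μ → ∀ θ : ℝ, 0 < θ →
      2 * c * (∫ x, h x ^ 2 ∂μ)
        ≤ 6 * C * (∫ x, (h x - u x) ^ 2 ∂μ) + 3 * θ ^ 2 * C * (μ Set.univ).toReal := by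
    intro u hu_cont hu_mem θ hθ
    set w : M → ℝ := fun x => h x - u x with hw_def
    have hw_mem : MemLp w 2 μ := by
      have := hh_mem.sub hu_mem
      simpa [hw_def, Pi.sub_def] using this
    have hw2 : Integrable (fun x => w x ^ 2) μ := hw_mem.integrable_sq
    -- modulus of continuity
    obtain ⟨t₀, ht₀, hmod⟩ := Metric.uniformContinuous_iff.mp
      (CompactSpace.uniformContinuous_of_continuous hu_cont) θ hθ
    set t : ℝ := min (t₀ / 2) (ε / 2) with ht_def
    have ht_pos : 0 < t := lt_min (by linarith) (by linarith)
    have ht_lt_ε : t < ε := lt_of_le_of_lt (min_le_right _ _) (by linarith)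
    have ht_le : t ≤ t₀ / 2 := min_le_left _ _
    have htk : 0 < t ^ k := pow_pos ht_pos k
    have hctk : (0:ℝ) ≤ c * t ^ k := mul_nonneg hc.le htk.le
    have hCtk : (0:ℝ) ≤ C * t ^ k := mul_nonneg hC.le htk.le
    have hS := measurableSet_S (M := M) t
    -- ball-measure bounds
    have hball_lb : ∀ x : M, c * t ^ k ≤ (μ (Metric.ball x t)).toReal := by
      intro x
      have h1 := (hvol x t ht_pos ht_lt_ε).1
      have h2 := (hvol x t ht_pos ht_lt_ε).2
      have hne : μ (Metric.ball x t) ≠ ⊤ := (lt_of_le_of_lt h2 ENNReal.ofReal_lt_top).ne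
      have := ENNReal.toReal_mono hne h1
      rwa [ENNReal.toReal_ofReal hctk] at this
    have hball_ub : ∀ x : M, (μ (Metric.ball x t)).toReal ≤ C * t ^ k := by
      intro x
      have h2 := (hvol x t ht_pos ht_lt_ε).2
      have := ENNReal.toReal_mono ENNReal.ofReal_ne_top h2
      rwa [ENNReal.toReal_ofReal hCtk] at this
    -- Step A : symmetrization identity
    have hfsth : Integrable (fun p : M × M => h p.1 ^ 2) (μ.prod μ) := integrable_fst_sq μ h hh2
    have hsndh : Integrable (fun p : M × M => h p.2 ^ 2) (μ.prod μ) := integrable_snd_sq μ h hh2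
    have hcross : Integrable (fun p : M × M => h p.1 * h p.2) (μ.prod μ) :=
      hh_int.mul_prod hh_int
    have hsq_diff : Integrable (fun p : M × M => (h p.1 - h p.2) ^ 2) (μ.prod μ) := by
      have hI : Integrable (fun p : M × M =>
          h p.1 ^ 2 - 2 * (h p.1 * h p.2) + h p.2 ^ 2) (μ.prod μ) :=
        (hfsth.sub (hcross.const_mul 2)).add hsndh
      refine hI.congr (Eventually.of_forall fun p => ?_)
      ring
    have hswap_sq : (∫ p in S M t, h p.2 ^ 2 ∂(μ.prod μ))
        = ∫ p in S M t, h p.1 ^ 2 ∂(μ.prod μ) := by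
      have := swap_setIntegral μ (fun p : M × M => h p.1 ^ 2) t
      simpa using this
    have stepA : (∫ p in S M t, (h p.1 - h p.2) ^ 2 ∂(μ.prod μ))
        = 2 * ∫ p in S M t, h p.1 ^ 2 ∂(μ.prod μ) := by
      have e : (∫ p in S M t, (h p.1 - h p.2) ^ 2 ∂(μ.prod μ))
          = (∫ p in S M t, h p.1 ^ 2 ∂(μ.prod μ))
            - 2 * (∫ p in S M t, h p.1 * h p.2 ∂(μ.prod μ))
            + ∫ p in S M t, h p.2 ^ 2 ∂(μ.prod μ) := by
        have c2 : IntegrableOn (fun p : M × M => 2 * (h p.1 * h p.2)) (S M t) (μ.prod μ) :=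
          (hcross.integrableOn).const_mul 2
        have d1 : IntegrableOn (fun p : M × M => h p.1 ^ 2 - 2 * (h p.1 * h p.2))
            (S M t) (μ.prod μ) := hfsth.integrableOn.sub c2
        rw [← integral_const_mul, ← integral_sub hfsth.integrableOn c2,
          ← integral_add d1 hsndh.integrableOn]
        refine integral_congr_ae (Eventually.of_forall fun p => ?_)
        ring
      rw [e, hJ t ht_pos, hswap_sq]; ring
    -- Step B : lower bound
    have stepB : c * t ^ k * (∫ x, h x ^ 2 ∂μ) ≤ ∫ p in S M t, h p.1 ^ 2 ∂(μ.prod μ) := by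
      have e := fst_eq μ (fun x => h x ^ 2) hh2 t
      have hInt : Integrable (fun x => h x ^ 2 * (μ (Metric.ball x t)).toReal) μ :=
        integrable_mul_ball μ _ hh2 t
      have hmono : (∫ x, h x ^ 2 * (c * t ^ k) ∂μ)
          ≤ ∫ x, h x ^ 2 * (μ (Metric.ball x t)).toReal ∂μ := by
        refine integral_mono (hh2.mul_const _) hInt fun x => ?_
        exact mul_le_mul_of_nonneg_left (hball_lb x) (sq_nonneg _)
      calc c * t ^ k * (∫ x, h x ^ 2 ∂μ) = ∫ x, h x ^ 2 * (c * t ^ k) ∂μ := by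
            rw [integral_mul_const]; ring
        _ ≤ ∫ x, h x ^ 2 * (μ (Metric.ball x t)).toReal ∂μ := hmono
        _ = ∫ p in S M t, h p.1 ^ 2 ∂(μ.prod μ) := e.symm
    -- upper bound for the w-terms
    have stepW : (∫ p in S M t, w p.1 ^ 2 ∂(μ.prod μ))
        ≤ C * t ^ k * ∫ x, w x ^ 2 ∂μ := by
      have e := fst_eq μ (fun x => w x ^ 2) hw2 t
      have hInt : Integrable (fun x => w x ^ 2 * (μ (Metric.ball x t)).toReal) μ :=
        integrable_mul_ball μ _ hw2 t
      have hmono : (∫ x, w x ^ 2 * (μ (Metric.ball x t)).toReal ∂μ)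
          ≤ ∫ x, w x ^ 2 * (C * t ^ k) ∂μ := by
        refine integral_mono hInt (hw2.mul_const _) fun x => ?_
        exact mul_le_mul_of_nonneg_left (hball_ub x) (sq_nonneg _)
      calc (∫ p in S M t, w p.1 ^ 2 ∂(μ.prod μ))
          = ∫ x, w x ^ 2 * (μ (Metric.ball x t)).toReal ∂μ := e
        _ ≤ ∫ x, w x ^ 2 * (C * t ^ k) ∂μ := hmono
        _ = C * t ^ k * ∫ x, w x ^ 2 ∂μ := by rw [integral_mul_const]; ring
    have hswap_w : (∫ p in S M t, w p.2 ^ 2 ∂(μ.prod μ))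
        = ∫ p in S M t, w p.1 ^ 2 ∂(μ.prod μ) := by
      have := swap_setIntegral μ (fun p : M × M => w p.1 ^ 2) t
      simpa using this
    -- measure of S M t
    have hStop : (μ.prod μ) (S M t) ≤ ENNReal.ofReal (C * t ^ k) * μ Set.univ := by
      rw [Measure.prod_apply hS]
      have hpre : ∀ x : M, Prod.mk x ⁻¹' S M t = Metric.ball x t := by
        intro x; ext y; simp [S, Metric.mem_ball, dist_comm]
      calc (∫⁻ x, μ (Prod.mk x ⁻¹' S M t) ∂μ)
          ≤ ∫⁻ _, ENNReal.ofReal (C * t ^ k) ∂μ := by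
            refine lintegral_mono fun x => ?_
            rw [hpre x]; exact (hvol x t ht_pos ht_lt_ε).2
        _ = ENNReal.ofReal (C * t ^ k) * μ Set.univ := lintegral_const _
    have hStoReal : ((μ.prod μ) (S M t)).toReal ≤ C * t ^ k * (μ Set.univ).toReal := by
      have hne : ENNReal.ofReal (C * t ^ k) * μ Set.univ ≠ ⊤ :=
        ENNReal.mul_ne_top ENNReal.ofReal_ne_top (measure_ne_top μ _)
      have := ENNReal.toReal_mono hne hStop
      rwa [ENNReal.toReal_mul, ENNReal.toReal_ofReal hCtk] at this
    -- Step C : pointwise bound and splitting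
    have hwfst : Integrable (fun p : M × M => w p.1 ^ 2) (μ.prod μ) := integrable_fst_sq μ w hw2
    have hwsnd : Integrable (fun p : M × M => w p.2 ^ 2) (μ.prod μ) := integrable_snd_sq μ w hw2
    have hRHSint : Integrable
        (fun p : M × M => 3 * w p.1 ^ 2 + 3 * θ ^ 2 + 3 * w p.2 ^ 2) (μ.prod μ) :=
      ((hwfst.const_mul 3).add (integrable_const _)).add (hwsnd.const_mul 3)
    have stepC : (∫ p in S M t, (h p.1 - h p.2) ^ 2 ∂(μ.prod μ))
        ≤ ∫ p in S M t, (3 * w p.1 ^ 2 + 3 * θ ^ 2 + 3 * w p.2 ^ 2) ∂(μ.prod μ) := by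
      refine setIntegral_mono_on hsq_diff.integrableOn hRHSint.integrableOn hS fun p hp => ?_
      have hd : dist p.1 p.2 < t₀ := lt_of_lt_of_le (mem_S_iff.mp hp) (by linarith)
      have hu : |u p.1 - u p.2| < θ := by
        have := hmod hd
        rwa [Real.dist_eq] at this
      have hu2 : (u p.1 - u p.2) ^ 2 ≤ θ ^ 2 := by
        have h1 : (u p.1 - u p.2) ^ 2 = |u p.1 - u p.2| ^ 2 := (sq_abs _).symm
        rw [h1]
        exact pow_le_pow_left₀ (abs_nonneg _) hu.le 2
      have hdec : h p.1 - h p.2 = w p.1 + (u p.1 - u p.2) - w p.2 := by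
        simp only [hw_def]; ring
      rw [hdec]
      nlinarith [hu2, sq_nonneg (w p.1 - (u p.1 - u p.2)),
        sq_nonneg ((u p.1 - u p.2) + w p.2), sq_nonneg (w p.1 + w p.2)]
    have split : (∫ p in S M t, (3 * w p.1 ^ 2 + 3 * θ ^ 2 + 3 * w p.2 ^ 2) ∂(μ.prod μ))
        = 3 * (∫ p in S M t, w p.1 ^ 2 ∂(μ.prod μ)) + 3 * θ ^ 2 * ((μ.prod μ) (S M t)).toReal
          + 3 * (∫ p in S M t, w p.2 ^ 2 ∂(μ.prod μ)) := by
      have a1 : IntegrableOn (fun p : M × M => 3 * w p.1 ^ 2 + 3 * θ ^ 2)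
          (S M t) (μ.prod μ) :=
        ((hwfst.const_mul 3).integrableOn).add
          ((integrableOn_const_iff).mpr (Or.inr (measure_lt_top _ _)))
      have a2 : IntegrableOn (fun p : M × M => 3 * w p.2 ^ 2) (S M t) (μ.prod μ) :=
        (hwsnd.const_mul 3).integrableOn
      have e1 : (∫ p in S M t, 3 * w p.1 ^ 2 ∂(μ.prod μ))
          = 3 * ∫ p in S M t, w p.1 ^ 2 ∂(μ.prod μ) :=
        integral_const_mul 3 _
      have e2 : (∫ p in S M t, 3 * w p.2 ^ 2 ∂(μ.prod μ))
          = 3 * ∫ p in S M t, w p.2 ^ 2 ∂(μ.prod μ) :=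
        integral_const_mul 3 _
      have e3 : (∫ _p in S M t, 3 * θ ^ 2 ∂(μ.prod μ))
          = ((μ.prod μ) (S M t)).toReal * (3 * θ ^ 2) := by
        rw [setIntegral_const, smul_eq_mul, Measure.real]
      rw [integral_add a1 a2,
        integral_add ((hwfst.const_mul 3).integrableOn) ((integrableOn_const_iff).mpr
          (Or.inr (measure_lt_top _ _))), e1, e2, e3]
      ring
    -- assemble
    have chain : 2 * (c * t ^ k * (∫ x, h x ^ 2 ∂μ))
        ≤ 6 * (C * t ^ k * (∫ x, w x ^ 2 ∂μ))
          + 3 * θ ^ 2 * (C * t ^ k * (μ Set.univ).toReal) := by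
      have h1 : 2 * (c * t ^ k * (∫ x, h x ^ 2 ∂μ))
          ≤ 2 * ∫ p in S M t, h p.1 ^ 2 ∂(μ.prod μ) := by linarith [stepB]
      have h2 : 2 * (∫ p in S M t, h p.1 ^ 2 ∂(μ.prod μ))
          ≤ ∫ p in S M t, (3 * w p.1 ^ 2 + 3 * θ ^ 2 + 3 * w p.2 ^ 2) ∂(μ.prod μ) := by
        rw [← stepA]; exact stepC
      have h3 : (∫ p in S M t, (3 * w p.1 ^ 2 + 3 * θ ^ 2 + 3 * w p.2 ^ 2) ∂(μ.prod μ))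
          ≤ 6 * (C * t ^ k * (∫ x, w x ^ 2 ∂μ))
            + 3 * θ ^ 2 * (C * t ^ k * (μ Set.univ).toReal) := by
        rw [split, hswap_w]
        have hθ2 : (0:ℝ) ≤ 3 * θ ^ 2 := by positivity
        nlinarith [stepW, hStoReal, mul_le_mul_of_nonneg_left hStoReal hθ2]
      linarith
    -- divide by t^k
    have hdiv : (2 * c * (∫ x, h x ^ 2 ∂μ)) * t ^ k
        ≤ (6 * C * (∫ x, w x ^ 2 ∂μ) + 3 * θ ^ 2 * C * (μ Set.univ).toReal) * t ^ k := by
      linear_combination chain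
    have := le_of_mul_le_mul_right hdiv htk
    simpa [hw_def] using this
  -- use density of bounded continuous functions in L²
  have hI_nonneg : 0 ≤ ∫ x, h x ^ 2 ∂μ := integral_nonneg fun x => sq_nonneg _
  have hV : (0:ℝ) ≤ (μ Set.univ).toReal := ENNReal.toReal_nonneg
  have hI_le : ∀ δ : ℝ, 0 < δ → 2 * c * (∫ x, h x ^ 2 ∂μ) ≤ (6 * C + 1) * δ := by
    intro δ hδ
    -- choose continuous u with ∫ (h-u)² ≤ δ
    obtain ⟨u, hu_norm, hu_mem⟩ := hh_mem.exists_boundedContinuous_eLpNorm_sub_le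
      (by norm_num : (2 : ENNReal) ≠ ⊤)
      (show ENNReal.ofReal (Real.sqrt δ) ≠ 0 by
        rw [Ne, ENNReal.ofReal_eq_zero, not_le]; exact Real.sqrt_pos.mpr hδ)
    have hw_mem : MemLp (h - (u : M → ℝ)) 2 μ := hh_mem.sub hu_mem
    have hwnorm : (∫ x, (h x - u x) ^ 2 ∂μ) ≤ δ := by
      have e := hw_mem.eLpNorm_eq_integral_rpow_norm (by norm_num) (by norm_num)
      rw [e] at hu_norm
      set X : ℝ := ∫ a, ‖(h - (u : M → ℝ)) a‖ ^ (2 : ENNReal).toReal ∂μ with hX_def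
      have hXnn : 0 ≤ X := integral_nonneg fun a => by positivity
      have h1 : X ^ ((2 : ENNReal).toReal)⁻¹ ≤ Real.sqrt δ :=
        (ENNReal.ofReal_le_ofReal_iff (Real.sqrt_nonneg δ)).mp hu_norm
      have hx : X ^ ((2 : ENNReal).toReal)⁻¹ = Real.sqrt X := by
        rw [show ((2 : ENNReal).toReal)⁻¹ = (1/2 : ℝ) by norm_num, ← Real.sqrt_eq_rpow]
      rw [hx] at h1
      have hXle : X ≤ δ := by
        calc X = Real.sqrt X ^ 2 := (Real.sq_sqrt hXnn).symm
          _ ≤ Real.sqrt δ ^ 2 := pow_le_pow_left₀ (Real.sqrt_nonneg _) h1 2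
          _ = δ := Real.sq_sqrt hδ.le
      have heqX : X = ∫ x, (h x - u x) ^ 2 ∂μ := by
        rw [hX_def]
        refine integral_congr_ae (Eventually.of_forall fun x => ?_)
        show ‖(h - (u : M → ℝ)) x‖ ^ ((2 : ENNReal).toReal) = (h x - u x) ^ 2
        rw [show ((2 : ENNReal).toReal) = ((2 : ℕ) : ℝ) by norm_num,
          Real.rpow_natCast, Pi.sub_apply, Real.norm_eq_abs, sq_abs]
      rwa [heqX] at hXle
    -- choose θ
    have hD1 : (0:ℝ) < 3 * C * (μ Set.univ).toReal + 1 := by nlinarith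
    have hθpos : 0 < Real.sqrt (δ / (3 * C * (μ Set.univ).toReal + 1)) :=
      Real.sqrt_pos.mpr (div_pos hδ hD1)
    have hcore := core (u : M → ℝ) u.continuous hu_mem _ hθpos
    have hθsq : Real.sqrt (δ / (3 * C * (μ Set.univ).toReal + 1)) ^ 2
        = δ / (3 * C * (μ Set.univ).toReal + 1) :=
      Real.sq_sqrt (div_pos hδ hD1).le
    rw [hθsq] at hcore
    have h3 : 3 * (δ / (3 * C * (μ Set.univ).toReal + 1)) * C * (μ Set.univ).toReal ≤ δ := by
      rw [show 3 * (δ / (3 * C * (μ Set.univ).toReal + 1)) * C * (μ Set.univ).toReal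
          = δ * (3 * C * (μ Set.univ).toReal) / (3 * C * (μ Set.univ).toReal + 1) by ring,
        div_le_iff₀ hD1]
      nlinarith
    have h6 : 6 * C * (∫ x, (h x - u x) ^ 2 ∂μ) ≤ 6 * C * δ := by
      have h6C : (0:ℝ) ≤ 6 * C := by linarith
      exact mul_le_mul_of_nonneg_left hwnorm h6C
    linarith
  -- conclude ∫ h² = 0
  have hI0 : (∫ x, h x ^ 2 ∂μ) = 0 := by
    by_contra hne
    have hpos : 0 < ∫ x, h x ^ 2 ∂μ := lt_of_le_of_ne hI_nonneg (Ne.symm hne)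
    have h6C : (0:ℝ) < 6 * C + 1 := by linarith
    have hδ : 0 < c * (∫ x, h x ^ 2 ∂μ) / (6 * C + 1) :=
      div_pos (mul_pos hc hpos) h6C
    have hle := hI_le _ hδ
    have heq' : (6 * C + 1) * (c * (∫ x, h x ^ 2 ∂μ) / (6 * C + 1))
        = c * (∫ x, h x ^ 2 ∂μ) := by field_simp
    rw [heq'] at hle
    nlinarith [mul_pos hc hpos]
  have hsq0 := (integral_eq_zero_iff_of_nonneg (fun x => sq_nonneg (h x)) hh2).mp hI0
  filter_upwards [hsq0] with x hx
  have hx' : h x ^ 2 = 0 := by simpa using hx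
  have hx0 : h x = 0 := by
    exact (pow_eq_zero_iff two_ne_zero).mp hx'
  have : f x - g x = 0 := by simpa [hh_def] using hx0
  linarith [this]
end

section
/- Let h be a volume-regular generalized distance function on ℝ^k with comparison point ξ and comparison function δ, and let f, g be probability densities that are Lebesgue differentiable with respect to h at almost every point, have uniformly bounded centered oscillation with respect to h, and satisfy (f−g)·δ(·,ξ) ∈ L¹(ℝ^k) (which holds in particular when f·δ(·,ξ), g·δ(·,ξ) ∈ L¹(ℝ^k)). Define r(ξ,t) := (1/Φ(ξ,t)) ∫_{ℝ^k} |(f−g)(x)| ∫_{B_t^h(x)} |(f−g)(y) − (f−g)(x)| dy dx. Then r(ξ,t) → 0 as t → 0⁺. -/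
open MeasureTheory Filter Set

theorem remainder_term_vanishes {k : ℕ}
    (h : (Fin k → ℝ) → (Fin k → ℝ) → ℝ)
    -- generalized distance function
    (h_nonneg : ∀ x y, 0 ≤ h x y)
    (h_zero : ∀ x y, h x y = 0 ↔ x = y)
    -- volume-regularity, with comparison point ξ, comparison function δ, constants c, C
    (ε₀ : ℝ) (hε₀ : 0 < ε₀)
    (h_meas : ∀ x t, 0 < t → t < ε₀ → MeasurableSet (hball h x t))
    (h_lim : ∀ x, Tendsto (fun t => Phi h x t) (nhdsWithin 0 (Ioi 0)) (nhds 0))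
    (h_posvol : ∀ᵐ x ∂(volume : Measure (Fin k → ℝ)), ∀ t, 0 < t → t < ε₀ →
      0 < volume (hball h x t) ∧ volume (hball h x t) < ⊤)
    (ξ : Fin k → ℝ) (δ : (Fin k → ℝ) → (Fin k → ℝ) → ℝ)
    (hδ_pos : ∀ x y, 0 < δ x y)
    (c C : ℝ) (hc : 0 < c) (hC : 0 < C)
    (h_comp : ∀ᵐ x ∂(volume : Measure (Fin k → ℝ)), ∀ t, 0 < t → t < ε₀ →
      c * δ x ξ ≤ Phi h x t / Phi h ξ t ∧ Phi h x t / Phi h ξ t ≤ C * δ x ξ)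
    -- f and g are probability densities on ℝ^k
    (f g : (Fin k → ℝ) → ℝ)
    (hf_meas : Measurable f) (hg_meas : Measurable g)
    (hf_nonneg : ∀ x, 0 ≤ f x) (hg_nonneg : ∀ x, 0 ≤ g x)
    (hf_prob : ∫ x, f x = 1) (hg_prob : ∫ x, g x = 1)
    -- Lebesgue differentiability with respect to h at almost every point
    (hf_diff : ∀ᵐ x ∂(volume : Measure (Fin k → ℝ)),
      Tendsto (fun t => (∫ y in hball h x t, |f y - f x|) / Phi h x t)
        (nhdsWithin 0 (Ioi 0)) (nhds 0))
    (hg_diff : ∀ᵐ x ∂(volume : Measure (Fin k → ℝ)),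
      Tendsto (fun t => (∫ y in hball h x t, |g y - g x|) / Phi h x t)
        (nhdsWithin 0 (Ioi 0)) (nhds 0))
    -- uniformly bounded centered oscillation with respect to h
    (A : ℝ)
    (hf_osc : ∀ᵐ x ∂(volume : Measure (Fin k → ℝ)), ∀ t, 0 < t → t < ε₀ →
      (∫ y in hball h x t, |f y - f x|) ≤ A * Phi h x t)
    (hg_osc : ∀ᵐ x ∂(volume : Measure (Fin k → ℝ)), ∀ t, 0 < t → t < ε₀ →
      (∫ y in hball h x t, |g y - g x|) ≤ A * Phi h x t)
    -- integrability condition: (f−g)·δ(·,ξ) ∈ L¹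
    (hint_fg : Integrable (fun x => (f x - g x) * δ x ξ)) :
    Tendsto (fun t =>
        (1 / Phi h ξ t) *
          ∫ x, |f x - g x| * ∫ y in hball h x t, |(f y - g y) - (f x - g x)|)
      (nhdsWithin 0 (Ioi 0)) (nhds 0) := by
  classical
  -- f and g are integrable (their integrals are 1 ≠ 0)
  have hf_int : Integrable f (volume : Measure (Fin k → ℝ)) := by
    by_contra hcon
    rw [integral_undef hcon] at hf_prob; norm_num at hf_prob
  have hg_int : Integrable g (volume : Measure (Fin k → ℝ)) := by
    by_contra hcon
    rw [integral_undef hcon] at hg_prob; norm_num at hg_prob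
  -- the a.e. good set, with all the pointwise facts bundled
  have hAE : ∀ᵐ x ∂(volume : Measure (Fin k → ℝ)),
      (∀ τ, 0 < τ → τ < ε₀ →
        0 < Phi h x τ ∧ 0 < Phi h ξ τ ∧ Phi h x τ ≤ C * δ x ξ * Phi h ξ τ ∧
        (∫ y in hball h x τ, |(f y - g y) - (f x - g x)|) ≤
          (∫ y in hball h x τ, |f y - f x|) + (∫ y in hball h x τ, |g y - g x|) ∧
        (∫ y in hball h x τ, |f y - f x|) ≤ A * Phi h x τ ∧
        (∫ y in hball h x τ, |g y - g x|) ≤ A * Phi h x τ) ∧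
      Tendsto (fun τ => (∫ y in hball h x τ, |f y - f x|) / Phi h x τ)
        (nhdsWithin 0 (Ioi 0)) (nhds 0) ∧
      Tendsto (fun τ => (∫ y in hball h x τ, |g y - g x|) / Phi h x τ)
        (nhdsWithin 0 (Ioi 0)) (nhds 0) := by
    filter_upwards [h_posvol, h_comp, hf_diff, hg_diff, hf_osc, hg_osc]
      with x hx1 hx2 hx3 hx4 hx5 hx6
    refine ⟨fun τ hτ1 hτ2 => ?_, hx3, hx4⟩
    obtain ⟨hvpos, hvfin⟩ := hx1 τ hτ1 hτ2
    obtain ⟨hcl, hcu⟩ := hx2 τ hτ1 hτ2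
    have hΦx : 0 < Phi h x τ := ENNReal.toReal_pos hvpos.ne' hvfin.ne
    have hΦξ : 0 < Phi h ξ τ := by
      rcases (ENNReal.toReal_nonneg : (0:ℝ) ≤ Phi h ξ τ).lt_or_eq with hlt | heq
      · exact hlt
      · exfalso
        have heq' : Phi h ξ τ = 0 := heq.symm
        rw [heq', div_zero] at hcl
        nlinarith [mul_pos hc (hδ_pos x ξ)]
    have hΦle : Phi h x τ ≤ C * δ x ξ * Phi h ξ τ := (div_le_iff₀ hΦξ).mp hcu
    have hif : IntegrableOn (fun y => |f y - f x|) (hball h x τ) volume :=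
      ((hf_int.integrableOn).sub (integrableOn_const hvfin.ne)).abs
    have hig : IntegrableOn (fun y => |g y - g x|) (hball h x τ) volume :=
      ((hg_int.integrableOn).sub (integrableOn_const hvfin.ne)).abs
    have step : (∫ y in hball h x τ, |(f y - g y) - (f x - g x)|) ≤
        ∫ y in hball h x τ, (|f y - f x| + |g y - g x|) := by
      refine integral_mono_of_nonneg (Eventually.of_forall fun y => abs_nonneg _)
        (hif.add hig) (Eventually.of_forall fun y => ?_)
      show |f y - g y - (f x - g x)| ≤ |f y - f x| + |g y - g x|
      have hrw : f y - g y - (f x - g x) = f y - f x - (g y - g x) := by ring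
      rw [hrw]
      exact abs_sub _ _
    rw [integral_add hif hig] at step
    exact ⟨hΦx, hΦξ, hΦle, step, hx5 τ hτ1 hτ2, hx6 τ hτ1 hτ2⟩
  -- A ≥ 0
  obtain ⟨x₀, hx₀⟩ := hAE.exists
  have hA : 0 ≤ A := by
    obtain ⟨hΦx0, -, -, -, hOf0, -⟩ := hx₀.1 (ε₀/2) (by linarith) (by linarith)
    have h0 : 0 ≤ ∫ y in hball h x₀ (ε₀/2), |f y - f x₀| :=
      integral_nonneg fun y => abs_nonneg _
    nlinarith
  -- the dominating function
  set M : (Fin k → ℝ) → ℝ := fun x => 2 * A * C * (|f x - g x| * δ x ξ) with hM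
  have hMint : Integrable M (volume : Measure (Fin k → ℝ)) := by
    have h1 : Integrable (fun x => |f x - g x| * δ x ξ) (volume : Measure (Fin k → ℝ)) := by
      refine hint_fg.abs.congr (Eventually.of_forall fun x => ?_)
      show |(f x - g x) * δ x ξ| = |f x - g x| * δ x ξ
      rw [abs_mul, abs_of_pos (hδ_pos x ξ)]
    exact h1.const_mul _
  -- the rescaled integrand
  set U : ℝ → (Fin k → ℝ) → ℝ := fun τ x =>
    (1 / Phi h ξ τ) * (|f x - g x| * ∫ y in hball h x τ, |(f y - g y) - (f x - g x)|)
    with hU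
  have hUnn : ∀ τ x, 0 ≤ U τ x := by
    intro τ x
    refine mul_nonneg (div_nonneg zero_le_one ENNReal.toReal_nonneg)
      (mul_nonneg (abs_nonneg _) ?_)
    exact integral_nonneg fun y => abs_nonneg _
  -- pointwise convergence of U to 0
  have hUlim : ∀ᵐ x ∂(volume : Measure (Fin k → ℝ)),
      Tendsto (fun τ => U τ x) (nhdsWithin 0 (Ioi 0)) (nhds 0) := by
    filter_upwards [hAE] with x hx
    have hb : Tendsto (fun τ => (C * δ x ξ * |f x - g x|) *
        ((∫ y in hball h x τ, |f y - f x|) / Phi h x τ +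
         (∫ y in hball h x τ, |g y - g x|) / Phi h x τ))
        (nhdsWithin 0 (Ioi 0)) (nhds 0) := by
      have := (hx.2.1.add hx.2.2).const_mul (C * δ x ξ * |f x - g x|)
      simpa using this
    refine tendsto_of_tendsto_of_tendsto_of_le_of_le' tendsto_const_nhds hb
      (Eventually.of_forall fun τ => hUnn τ x) ?_
    filter_upwards [Ioo_mem_nhdsGT_of_mem (⟨le_rfl, hε₀⟩ : (0:ℝ) ∈ Ico 0 ε₀)] with τ hτ
    obtain ⟨hΦx, hΦξ, hΦle, hOle, hOf, hOg⟩ := hx.1 τ hτ.1 hτ.2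
    have hOfnn : 0 ≤ ∫ y in hball h x τ, |f y - f x| := integral_nonneg fun y => abs_nonneg _
    have hOgnn : 0 ≤ ∫ y in hball h x τ, |g y - g x| := integral_nonneg fun y => abs_nonneg _
    rw [← add_div]
    have hkey : |f x - g x| * (∫ y in hball h x τ, |(f y - g y) - (f x - g x)|) * Phi h x τ ≤
        C * δ x ξ * |f x - g x| *
          ((∫ y in hball h x τ, |f y - f x|) + (∫ y in hball h x τ, |g y - g x|)) *
          Phi h ξ τ := by
      calc |f x - g x| * (∫ y in hball h x τ, |(f y - g y) - (f x - g x)|) * Phi h x τ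
          ≤ |f x - g x| *
              ((∫ y in hball h x τ, |f y - f x|) + (∫ y in hball h x τ, |g y - g x|)) *
              Phi h x τ :=
            mul_le_mul_of_nonneg_right (mul_le_mul_of_nonneg_left hOle (abs_nonneg _)) hΦx.le
        _ ≤ |f x - g x| *
              ((∫ y in hball h x τ, |f y - f x|) + (∫ y in hball h x τ, |g y - g x|)) *
              (C * δ x ξ * Phi h ξ τ) :=
            mul_le_mul_of_nonneg_left hΦle
              (mul_nonneg (abs_nonneg _) (add_nonneg hOfnn hOgnn))
        _ = C * δ x ξ * |f x - g x| *
              ((∫ y in hball h x τ, |f y - f x|) + (∫ y in hball h x τ, |g y - g x|)) *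
              Phi h ξ τ := by ring
    show (1 / Phi h ξ τ) * (|f x - g x| * ∫ y in hball h x τ, |(f y - g y) - (f x - g x)|) ≤ _
    rw [mul_comm (1 / Phi h ξ τ), mul_one_div, ← mul_div_assoc,
      div_le_div_iff₀ hΦξ hΦx]
    exact hkey
  -- uniform a.e. bound for small τ
  have hUbdd : ∀ τ, 0 < τ → τ < ε₀ → ∀ᵐ x ∂(volume : Measure (Fin k → ℝ)),
      ‖U τ x‖ ≤ M x := by
    intro τ hτ1 hτ2
    filter_upwards [hAE] with x hx
    obtain ⟨hΦx, hΦξ, hΦle, hOle, hOf, hOg⟩ := hx.1 τ hτ1 hτ2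
    rw [Real.norm_eq_abs, abs_of_nonneg (hUnn τ x)]
    have hO2 : (∫ y in hball h x τ, |(f y - g y) - (f x - g x)|) ≤ 2 * A * Phi h x τ := by
      linarith
    have hstep : |f x - g x| * (∫ y in hball h x τ, |(f y - g y) - (f x - g x)|) ≤
        M x * Phi h ξ τ := by
      calc |f x - g x| * (∫ y in hball h x τ, |(f y - g y) - (f x - g x)|)
          ≤ |f x - g x| * (2 * A * Phi h x τ) :=
            mul_le_mul_of_nonneg_left hO2 (abs_nonneg _)
        _ ≤ |f x - g x| * (2 * A * (C * δ x ξ * Phi h ξ τ)) := by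
            refine mul_le_mul_of_nonneg_left ?_ (abs_nonneg _)
            exact mul_le_mul_of_nonneg_left hΦle (by linarith)
        _ = M x * Phi h ξ τ := by rw [hM]; ring
    show (1 / Phi h ξ τ) * (|f x - g x| * ∫ y in hball h x τ, |(f y - g y) - (f x - g x)|) ≤ M x
    rw [mul_comm (1 / Phi h ξ τ), mul_one_div, div_le_iff₀ hΦξ]
    exact hstep
  -- the main convergence, via a sequential argument and dominated convergence
  have key : Tendsto (fun τ => ∫ x, U τ x) (nhdsWithin 0 (Ioi 0)) (nhds 0) := by
    rw [tendsto_iff_seq_tendsto]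
    intro ts hts
    have htsIoo : ∀ᶠ n in atTop, ts n ∈ Ioo 0 ε₀ :=
      hts (Ioo_mem_nhdsGT_of_mem (⟨le_rfl, hε₀⟩ : (0:ℝ) ∈ Ico 0 ε₀))
    set w : ℕ → (Fin k → ℝ) → ℝ := fun n x =>
      if Integrable (U (ts n)) (volume : Measure (Fin k → ℝ)) then U (ts n) x else 0 with hw
    have hint_eq : ∀ n, ∫ x, U (ts n) x = ∫ x, w n x := by
      intro n
      by_cases hn : Integrable (U (ts n)) (volume : Measure (Fin k → ℝ))
      · simp [hw, hn]
      · rw [integral_undef hn]; simp [hw, hn]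
    have hmeas : ∀ᶠ n in atTop, AEStronglyMeasurable (w n) (volume : Measure (Fin k → ℝ)) := by
      refine Eventually.of_forall fun n => ?_
      by_cases hn : Integrable (U (ts n)) (volume : Measure (Fin k → ℝ))
      · simpa [hw, hn] using hn.1
      · simp only [hw, if_neg hn]
        exact aestronglyMeasurable_const
    have hbound : ∀ᶠ n in atTop, ∀ᵐ x ∂(volume : Measure (Fin k → ℝ)), ‖w n x‖ ≤ M x := by
      filter_upwards [htsIoo] with n hn
      filter_upwards [hUbdd (ts n) hn.1 hn.2, hAE] with x hx hx'
      by_cases hI : Integrable (U (ts n)) (volume : Measure (Fin k → ℝ))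
      · simpa [hw, hI] using hx
      · simp only [hw, if_neg hI, norm_zero, hM]
        have : 0 ≤ 2 * A := by linarith
        exact mul_nonneg (mul_nonneg this hC.le)
          (mul_nonneg (abs_nonneg _) (hδ_pos x ξ).le)
    have hlim : ∀ᵐ x ∂(volume : Measure (Fin k → ℝ)),
        Tendsto (fun n => w n x) atTop (nhds 0) := by
      filter_upwards [hUlim] with x hx
      have hcomp : Tendsto (fun n => U (ts n) x) atTop (nhds 0) := hx.comp hts
      have habs : Tendsto (fun n => |U (ts n) x|) atTop (nhds 0) := by
        simpa using hcomp.abs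
      refine squeeze_zero_norm (fun n => ?_) habs
      by_cases hI : Integrable (U (ts n)) (volume : Measure (Fin k → ℝ))
      · simp [hw, hI, Real.norm_eq_abs]
      · simp [hw, hI, abs_nonneg]
    have hdct := tendsto_integral_filter_of_dominated_convergence
      (μ := (volume : Measure (Fin k → ℝ))) (F := w) (f := fun _ => (0:ℝ)) M
      hmeas hbound hMint (by simpa using hlim)
    simp only [integral_zero] at hdct
    refine hdct.congr fun n => ?_
    exact (hint_eq n).symm
  refine key.congr fun τ => ?_
  simp only [hU]
  exact integral_const_mul _ _
end

section
/- Consider the one-dimensional Canberra distance h(x,y) := |x−y|/(|x|+|y|) (with h(0,0) := 0), and let Φ(x,t) := μ(B_t(x)) with μ Lebesgue measure on ℝ. Then for every x ≠ 0 and t ∈ (0,1), Φ(x,t) = 4t|x|/(1−t²); moreover for t ∈ (0,1), B_t(0) = {0} and hence Φ(0,t) = 0. -/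
open MeasureTheory Set Pointwise

/-- The one-dimensional Canberra distance. Note that by the Lean convention `0 / 0 = 0`,
this automatically satisfies `canberra 0 0 = 0`. -/
noncomputable def canberra (x y : ℝ) : ℝ := |x - y| / (|x| + |y|)

/-!
For `x > 0` the ball `B_t(x)` contains no `y ≤ 0` (there `h(x, y) = 1`), and for `y > 0` the
inequality `|x - y| < t (x + y)` unfolds to `(1 - t) x < (1 + t) y` and `(1 - t) y < (1 + t) x`.
So `B_t(x)` is the interval `((1 - t)/(1 + t) x, (1 + t)/(1 - t) x)`, of length `4 t x / (1 - t²)`.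
Since `h(-x, -y) = h(x, y)`, `B_t(-x) = -B_t(x)` has the same measure. At the centre `0`,
`h(0, y) = 1` for every `y ≠ 0`, so `B_t(0) = {0}`.
-/

lemma canberra_neg_neg (x y : ℝ) : canberra (-x) (-y) = canberra x y := by
  simp only [canberra, neg_sub_neg, abs_neg, abs_sub_comm]

lemma canberra_zero_left {y : ℝ} (hy : y ≠ 0) : canberra 0 y = 1 := by
  simp [canberra, hy]

lemma setOf_canberra_zero_lt {t : ℝ} (ht₀ : 0 < t) (ht₁ : t ≤ 1) :
    {y : ℝ | canberra 0 y < t} = {0} := by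
  ext y
  rcases eq_or_ne y 0 with rfl | hy
  · simp [canberra, ht₀]
  · simp [canberra_zero_left hy, hy, ht₁]

lemma setOf_canberra_neg_lt (x t : ℝ) :
    {y : ℝ | canberra (-x) y < t} = -{y : ℝ | canberra x y < t} := by
  ext y
  rw [mem_neg, mem_ofPred_eq, mem_ofPred_eq, ← canberra_neg_neg, neg_neg]

lemma setOf_canberra_lt_of_pos {x t : ℝ} (hx : 0 < x) (ht₀ : 0 < t) (ht₁ : t < 1) :
    {y : ℝ | canberra x y < t} = Ioo ((1 - t) / (1 + t) * x) ((1 + t) / (1 - t) * x) := by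
  have h1t : 0 < 1 + t := by linarith
  have h1t' : 0 < 1 - t := by linarith
  ext y
  rw [mem_ofPred_eq, mem_Ioo, div_mul_eq_mul_div, div_mul_eq_mul_div, div_lt_iff₀ h1t,
    lt_div_iff₀ h1t']
  rcases le_or_gt y 0 with hy | hy
  · have h_one : canberra x y = 1 := by
      rw [canberra, abs_of_pos hx, abs_of_nonpos hy, abs_of_pos (by linarith)]
      exact div_self (by linarith)
    rw [h_one]
    constructor
    · intro h; linarith
    · rintro ⟨h, -⟩; nlinarith
  · rw [canberra, abs_of_pos hx, abs_of_pos hy, div_lt_iff₀ (by linarith), abs_lt]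
    constructor <;> rintro ⟨h, h'⟩ <;> constructor <;> linarith

lemma volume_setOf_canberra_lt_of_pos {x t : ℝ} (hx : 0 < x) (ht₀ : 0 < t) (ht₁ : t < 1) :
    volume {y : ℝ | canberra x y < t} = ENNReal.ofReal (4 * t * x / (1 - t ^ 2)) := by
  have h1t : 0 < 1 + t := by linarith
  have h1t' : 0 < 1 - t := by linarith
  have h_den : 1 - t ^ 2 ≠ 0 := by nlinarith
  rw [setOf_canberra_lt_of_pos hx ht₀ ht₁, Real.volume_Ioo]
  congr 1
  field_simp
  ring

lemma volume_setOf_canberra_abs_lt (x t : ℝ) :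
    volume {y : ℝ | canberra |x| y < t} = volume {y : ℝ | canberra x y < t} := by
  rcases abs_choice x with h | h <;> rw [h]
  rw [setOf_canberra_neg_lt, Measure.measure_neg]

theorem canberra_ball_volume :
    (∀ x : ℝ, x ≠ 0 → ∀ t ∈ Set.Ioo (0 : ℝ) 1,
      (volume {y : ℝ | canberra x y < t}).toReal = 4 * t * |x| / (1 - t ^ 2)) ∧
    (∀ t ∈ Set.Ioo (0 : ℝ) 1,
      {y : ℝ | canberra 0 y < t} = {0} ∧ volume {y : ℝ | canberra 0 y < t} = 0) := by
  refine ⟨fun x hx t ⟨ht₀, ht₁⟩ => ?_, fun t ⟨ht₀, ht₁⟩ => ?_⟩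
  · have h_den : 0 < 1 - t ^ 2 := by nlinarith
    rw [← volume_setOf_canberra_abs_lt,
      volume_setOf_canberra_lt_of_pos (abs_pos.mpr hx) ht₀ ht₁, ENNReal.toReal_ofReal]
    positivity
  · have h_ball := setOf_canberra_zero_lt ht₀ ht₁.le
    exact ⟨h_ball, by rw [h_ball, Real.volume_singleton]⟩
end

section
/- Consider the Canberra distance h on ℝ^k, h(x,y) := Σ_{i=1}^k |x_i−y_i|/(|x_i|+|y_i|) (summands with x_i = y_i = 0 set to 0), and let Φ(x,t) := μ(B_t^h(x)) with μ Lebesgue measure on ℝ^k. Then for every t ∈ (0,1) and every x ∈ ℝ^k with x_i ≠ 0 for all i: ( 4(t/k)/(1−(t/k)²) )^k · ∏_{i=1}^k |x_i| ≤ Φ(x,t) ≤ ( 4t/(1−t²) )^k · ∏_{i=1}^k |x_i|. Moreover, if x_i = 0 for some i, then Φ(x,t) = 0 for t ∈ (0,1). -/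
open MeasureTheory Set

/-- The Canberra distance on ℝ^k; summands with `x i = y i = 0` vanish automatically
since `0 / 0 = 0` in Lean. -/
noncomputable def canberraK {k : ℕ} (x y : Fin k → ℝ) : ℝ :=
  ∑ i, |x i - y i| / (|x i| + |y i|)

lemma canberra_oneD_set (a s : ℝ) (ha : 0 < a) (hs : 0 < s) (hs1 : s < 1) :
    {y : ℝ | |a - y| / (|a| + |y|) < s}
      = Set.Ioo (a * (1 - s) / (1 + s)) (a * (1 + s) / (1 - s)) := by
  ext y
  simp only [Set.mem_setOf_eq, Set.mem_Ioo]
  constructor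
  · intro h
    have hy : 0 < y := by
      by_contra hy
      push_neg at hy
      rw [abs_of_pos ha, abs_of_nonpos hy, abs_of_pos (by linarith : (0:ℝ) < a - y),
        div_lt_iff₀ (by linarith)] at h
      nlinarith
    rw [abs_of_pos ha, abs_of_pos hy, div_lt_iff₀ (by linarith), abs_lt] at h
    obtain ⟨h1, h2⟩ := h
    constructor
    · rw [div_lt_iff₀ (by linarith)]; nlinarith
    · rw [lt_div_iff₀ (by linarith)]; nlinarith
  · rintro ⟨h1, h2⟩
    have hlo : 0 < a * (1 - s) / (1 + s) := by
      apply div_pos (by nlinarith) (by linarith)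
    have hy : 0 < y := lt_trans hlo h1
    rw [abs_of_pos ha, abs_of_pos hy, div_lt_iff₀ (by linarith), abs_lt]
    rw [div_lt_iff₀ (by linarith)] at h1
    rw [lt_div_iff₀ (by linarith)] at h2
    constructor <;> nlinarith

lemma canberra_oneD_vol (a s : ℝ) (ha : a ≠ 0) (hs : 0 < s) (hs1 : s < 1) :
    volume {y : ℝ | |a - y| / (|a| + |y|) < s}
      = ENNReal.ofReal (4 * s / (1 - s ^ 2) * |a|) := by
  rcases ha.lt_or_gt with hneg | hpos
  · have hset : {y : ℝ | |a - y| / (|a| + |y|) < s}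
        = (fun y : ℝ => -y) ⁻¹' {y : ℝ | |(-a) - y| / (|(-a)| + |y|) < s} := by
      ext y
      simp only [Set.mem_setOf_eq, Set.mem_preimage]
      rw [show (-a) - (-y) = -(a - y) by ring, abs_neg, abs_neg, abs_neg]
    rw [hset, Measure.measure_preimage_neg,
      canberra_oneD_set (-a) s (by linarith) hs hs1, Real.volume_Ioo]
    congr 1
    have h1 : (1 : ℝ) + s ≠ 0 := by linarith
    have h2 : (1 : ℝ) - s ≠ 0 := by linarith
    have h3 : (1 : ℝ) - s ^ 2 ≠ 0 := by nlinarith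
    rw [abs_of_neg hneg]
    field_simp
    ring
  · rw [canberra_oneD_set a s hpos hs hs1, Real.volume_Ioo]
    congr 1
    have h1 : (1 : ℝ) + s ≠ 0 := by linarith
    have h2 : (1 : ℝ) - s ≠ 0 := by linarith
    have h3 : (1 : ℝ) - s ^ 2 ≠ 0 := by nlinarith
    rw [abs_of_pos hpos]
    field_simp
    ring

theorem canberra_ball_volume_bounds {k : ℕ} (hk : 0 < k) (x : Fin k → ℝ) (t : ℝ)
    (ht : t ∈ Set.Ioo (0 : ℝ) 1) :
    ((∀ i, x i ≠ 0) →
      ENNReal.ofReal ((4 * (t / (k : ℝ)) / (1 - (t / (k : ℝ)) ^ 2)) ^ k * ∏ i, |x i|) ≤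
          volume {y : Fin k → ℝ | canberraK x y < t} ∧
        volume {y : Fin k → ℝ | canberraK x y < t} ≤
          ENNReal.ofReal ((4 * t / (1 - t ^ 2)) ^ k * ∏ i, |x i|)) ∧
    ((∃ i, x i = 0) → volume {y : Fin k → ℝ | canberraK x y < t} = 0) := by
  obtain ⟨ht0, ht1⟩ := ht
  have hkR : (0 : ℝ) < k := by exact_mod_cast hk
  haveI : NeZero k := ⟨hk.ne'⟩
  have hsummand : ∀ (y : Fin k → ℝ) (i : Fin k), 0 ≤ |x i - y i| / (|x i| + |y i|) :=
    fun y i => div_nonneg (abs_nonneg _) (by positivity)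
  constructor
  · intro hx
    constructor
    · -- lower bound
      set s : ℝ := t / k with hs_def
      have hs0 : 0 < s := div_pos ht0 hkR
      have hs1 : s < 1 := lt_of_le_of_lt (div_le_self ht0.le (by exact_mod_cast hk)) ht1
      have hsub : Set.pi Set.univ (fun i => {y : ℝ | |x i - y| / (|x i| + |y|) < s})
          ⊆ {y : Fin k → ℝ | canberraK x y < t} := by
        intro y hy
        simp only [Set.mem_pi, Set.mem_univ, forall_true_left, Set.mem_setOf_eq] at hy ⊢
        have hlt : canberraK x y < ∑ _i : Fin k, s :=
          Finset.sum_lt_sum_of_nonempty Finset.univ_nonempty fun i _ => hy i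
        have : (∑ _i : Fin k, s) = t := by
          rw [Finset.sum_const, Finset.card_univ, Fintype.card_fin, nsmul_eq_mul, hs_def,
            mul_div_cancel₀ _ hkR.ne']
        linarith
      calc ENNReal.ofReal ((4 * s / (1 - s ^ 2)) ^ k * ∏ i, |x i|)
          = volume (Set.pi Set.univ (fun i => {y : ℝ | |x i - y| / (|x i| + |y|) < s})) := by
            rw [volume_pi_pi]
            have : ∀ i : Fin k, volume {y : ℝ | |x i - y| / (|x i| + |y|) < s}
                = ENNReal.ofReal (4 * s / (1 - s ^ 2) * |x i|) := fun i =>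
              canberra_oneD_vol (x i) s (hx i) hs0 hs1
            simp_rw [this]
            rw [← ENNReal.ofReal_prod_of_nonneg (fun i _ => mul_nonneg
              (le_of_lt (div_pos (by linarith) (by nlinarith))) (abs_nonneg _))]
            congr 1
            rw [Finset.prod_mul_distrib, Finset.prod_const, Finset.card_univ, Fintype.card_fin]
        _ ≤ volume {y : Fin k → ℝ | canberraK x y < t} := measure_mono hsub
    · -- upper bound
      have hsub : {y : Fin k → ℝ | canberraK x y < t}
          ⊆ Set.pi Set.univ (fun i => {y : ℝ | |x i - y| / (|x i| + |y|) < t}) := by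
        intro y hy
        simp only [Set.mem_setOf_eq] at hy
        simp only [Set.mem_pi, Set.mem_univ, forall_true_left, Set.mem_setOf_eq]
        intro i
        exact lt_of_le_of_lt
          (Finset.single_le_sum (fun j _ => hsummand y j) (Finset.mem_univ i)) hy
      calc volume {y : Fin k → ℝ | canberraK x y < t}
          ≤ volume (Set.pi Set.univ (fun i => {y : ℝ | |x i - y| / (|x i| + |y|) < t})) :=
            measure_mono hsub
        _ = ENNReal.ofReal ((4 * t / (1 - t ^ 2)) ^ k * ∏ i, |x i|) := by
            rw [volume_pi_pi]
            have : ∀ i : Fin k, volume {y : ℝ | |x i - y| / (|x i| + |y|) < t}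
                = ENNReal.ofReal (4 * t / (1 - t ^ 2) * |x i|) := fun i =>
              canberra_oneD_vol (x i) t (hx i) ht0 ht1
            simp_rw [this]
            rw [← ENNReal.ofReal_prod_of_nonneg (fun i _ => mul_nonneg
              (le_of_lt (div_pos (by linarith) (by nlinarith))) (abs_nonneg _))]
            congr 1
            rw [Finset.prod_mul_distrib, Finset.prod_const, Finset.card_univ, Fintype.card_fin]
  · rintro ⟨i₀, hi₀⟩
    have hsub : {y : Fin k → ℝ | canberraK x y < t}
        ⊆ Set.pi Set.univ (fun i => if i = i₀ then ({0} : Set ℝ) else Set.univ) := by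
      intro y hy
      simp only [Set.mem_setOf_eq] at hy
      simp only [Set.mem_pi, Set.mem_univ, forall_true_left]
      intro i
      by_cases hii : i = i₀
      · subst hii
        simp only [if_pos rfl, Set.mem_singleton_iff]
        by_contra hy0
        have h1 : |x i - y i| / (|x i| + |y i|) = 1 := by
          rw [hi₀, zero_sub, abs_neg, abs_zero, zero_add, div_self (abs_ne_zero.mpr hy0)]
        have := Finset.single_le_sum (fun j _ => hsummand y j) (Finset.mem_univ i)
        rw [h1] at this
        unfold canberraK at hy
        linarith
      · simp [hii]
    refine le_antisymm (le_trans (measure_mono hsub) ?_) zero_le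
    rw [volume_pi_pi]
    refine le_of_eq (Finset.prod_eq_zero (Finset.mem_univ i₀) ?_)
    simp
end

section
/- Consider the one-dimensional entropic distance h(x,y) := |x·log(x/y) − x + y| on (0,∞). For every x > 0 and every t with 0 < t ≤ x/12, the sublevel set B_t(x) := {y > 0 : h(x,y) < t} satisfies ( x − √(6xt/11), x + √(6xt/11) ) ⊆ B_t(x) ⊆ ( x − √(3xt), x + √(3xt) ). In particular, √(6xt/11)·2 ≤ μ(B_t(x)) ≤ 2√(3xt), so the volume of entropic balls around x behaves like a constant multiple of √(xt) as t → 0⁺. -/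
open Real Set

private lemma hasDerivAt_f1 (v : ℝ) (hv : v ≠ 0) :
    HasDerivAt (fun v : ℝ => v ^ 2 - 1 - 2 * v * Real.log v)
      (2 * v - (2 * Real.log v + 2 * v * v⁻¹)) v := by
  have h1 : HasDerivAt (fun v : ℝ => v ^ 2 - 1) (2 * v) v := by
    simpa using ((hasDerivAt_pow 2 v).sub_const 1)
  have hm : HasDerivAt (fun v : ℝ => 2 * v) 2 v := by
    simpa using (hasDerivAt_id v).const_mul (2 : ℝ)
  exact h1.sub (hm.mul (Real.hasDerivAt_log hv))

lemma log_le_sinh {u : ℝ} (hu : 1 ≤ u) : 2 * u * Real.log u ≤ u ^ 2 - 1 := by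
  set f : ℝ → ℝ := fun v => v ^ 2 - 1 - 2 * v * Real.log v with hf
  have hmono : MonotoneOn f (Set.Ici 1) := by
    apply monotoneOn_of_deriv_nonneg (convex_Ici 1)
    · intro v hv
      have hv0 : (0:ℝ) < v := lt_of_lt_of_le one_pos hv
      exact ((hasDerivAt_f1 v hv0.ne').continuousAt).continuousWithinAt
    · intro v hv
      rw [interior_Ici] at hv
      have hv0 : (0:ℝ) < v := lt_trans one_pos hv
      exact (hasDerivAt_f1 v hv0.ne').differentiableAt.differentiableWithinAt
    · intro v hv
      rw [interior_Ici] at hv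
      have hv0 : (0:ℝ) < v := lt_trans one_pos hv
      rw [(hasDerivAt_f1 v hv0.ne').deriv]
      have hlog : Real.log v ≤ v - 1 := Real.log_le_sub_one_of_pos hv0
      have hvv : 2 * v * v⁻¹ = 2 := by field_simp
      rw [hvv]
      linarith
  have h0 : f 1 = 0 := by simp [hf]
  have := hmono (Set.mem_Ici.2 le_rfl) (Set.mem_Ici.2 hu) hu
  rw [h0] at this
  simp only [hf] at this
  linarith

private lemma hasDerivAt_f2 (v : ℝ) (hv : v ≠ 0) :
    HasDerivAt (fun v : ℝ => (v + 1) * Real.log v - 2 * (v - 1))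
      ((1 * Real.log v + (v + 1) * v⁻¹) - 2) v := by
  have h1 : HasDerivAt (fun v : ℝ => (v + 1)) 1 v := by
    simpa using (hasDerivAt_id v).add_const (1:ℝ)
  have h3 : HasDerivAt (fun v : ℝ => 2 * (v - 1)) 2 v := by
    simpa using ((hasDerivAt_id v).sub_const (1:ℝ)).const_mul (2:ℝ)
  exact (h1.mul (Real.hasDerivAt_log hv)).sub h3

lemma pade_le_log {u : ℝ} (hu : 1 ≤ u) : 2 * (u - 1) ≤ (u + 1) * Real.log u := by
  set f : ℝ → ℝ := fun v => (v + 1) * Real.log v - 2 * (v - 1) with hf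
  have hmono : MonotoneOn f (Set.Ici 1) := by
    apply monotoneOn_of_deriv_nonneg (convex_Ici 1)
    · intro v hv
      have hv0 : (0:ℝ) < v := lt_of_lt_of_le one_pos hv
      exact ((hasDerivAt_f2 v hv0.ne').continuousAt).continuousWithinAt
    · intro v hv
      rw [interior_Ici] at hv
      have hv0 : (0:ℝ) < v := lt_trans one_pos hv
      exact (hasDerivAt_f2 v hv0.ne').differentiableAt.differentiableWithinAt
    · intro v hv
      rw [interior_Ici] at hv
      have hv0 : (0:ℝ) < v := lt_trans one_pos hv
      rw [(hasDerivAt_f2 v hv0.ne').deriv]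
      have hlog : 1 - v⁻¹ ≤ Real.log v := Real.one_sub_inv_le_log_of_pos hv0
      have hvv : (v + 1) * v⁻¹ = 1 + 1/v := by field_simp
      rw [hvv]
      rw [inv_eq_one_div] at hlog
      linarith
  have h0 : f 1 = 0 := by simp [hf]
  have := hmono (Set.mem_Ici.2 le_rfl) (Set.mem_Ici.2 hu) hu
  rw [h0] at this
  simp only [hf] at this
  linarith

lemma sinh_le_log' {u : ℝ} (hu0 : 0 < u) (hu : u ≤ 1) : u ^ 2 - 1 ≤ 2 * u * Real.log u := by
  have hv : 1 ≤ u⁻¹ := (one_le_inv₀ hu0).2 hu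
  have h := log_le_sinh hv
  rw [Real.log_inv] at h
  have h2 := mul_le_mul_of_nonneg_left h (by positivity : (0:ℝ) ≤ u ^ 2)
  have e1 : u ^ 2 * (2 * u⁻¹ * -Real.log u) = -(2 * u * Real.log u) := by
    field_simp
  have e2 : u ^ 2 * ((u⁻¹) ^ 2 - 1) = 1 - u ^ 2 := by
    field_simp
  rw [e1, e2] at h2
  linarith

lemma log_le_pade' {u : ℝ} (hu0 : 0 < u) (hu : u ≤ 1) : (u + 1) * Real.log u ≤ 2 * (u - 1) := by
  have hv : 1 ≤ u⁻¹ := (one_le_inv₀ hu0).2 hu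
  have h := pade_le_log hv
  rw [Real.log_inv] at h
  have h2 := mul_le_mul_of_nonneg_left h hu0.le
  have e1 : u * (2 * (u⁻¹ - 1)) = 2 * (1 - u) := by field_simp
  have e2 : u * ((u⁻¹ + 1) * -Real.log u) = -((1 + u) * Real.log u) := by
    field_simp
  rw [e1, e2] at h2
  linarith

open MeasureTheory Set

/-- The one-dimensional entropic distance on (0, ∞). -/
noncomputable def entropicDist (x y : ℝ) : ℝ := |x * Real.log (x / y) - x + y|

set_option maxHeartbeats 1000000 in
theorem entropic_ball_sandwich (x t : ℝ) (hx : 0 < x) (ht : 0 < t) (ht' : t ≤ x / 12) :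
    Set.Ioo (x - Real.sqrt (6 * x * t / 11)) (x + Real.sqrt (6 * x * t / 11)) ⊆
        {y : ℝ | 0 < y ∧ entropicDist x y < t} ∧
      {y : ℝ | 0 < y ∧ entropicDist x y < t} ⊆
        Set.Ioo (x - Real.sqrt (3 * x * t)) (x + Real.sqrt (3 * x * t)) ∧
      2 * Real.sqrt (6 * x * t / 11) ≤
        (volume {y : ℝ | 0 < y ∧ entropicDist x y < t}).toReal ∧
      (volume {y : ℝ | 0 < y ∧ entropicDist x y < t}).toReal ≤ 2 * Real.sqrt (3 * x * t) := by
  set r1 := Real.sqrt (6 * x * t / 11) with hr1def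
  set r2 := Real.sqrt (3 * x * t) with hr2def
  have harg1 : (0:ℝ) < 6 * x * t / 11 := by positivity
  have harg2 : (0:ℝ) < 3 * x * t := by positivity
  have hr1sq : r1 ^ 2 = 6 * x * t / 11 := Real.sq_sqrt harg1.le
  have hr2sq : r2 ^ 2 = 3 * x * t := Real.sq_sqrt harg2.le
  have hr1pos : 0 < r1 := Real.sqrt_pos.2 harg1
  have hr2pos : 0 < r2 := Real.sqrt_pos.2 harg2
  have hr1lt : r1 < x / 2 := by
    rw [hr1def]
    rw [show x / 2 = Real.sqrt ((x/2)^2) from (Real.sqrt_sq (by positivity)).symm]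
    apply Real.sqrt_lt_sqrt harg1.le
    nlinarith
  have hr2le : r2 ≤ x / 2 := by
    rw [hr2def]
    rw [show x / 2 = Real.sqrt ((x/2)^2) from (Real.sqrt_sq (by positivity)).symm]
    apply Real.sqrt_le_sqrt
    nlinarith
  have hexpr : ∀ y : ℝ, 0 < y →
      x * Real.log (x / y) - x + y = x * (y / x - 1 - Real.log (y / x)) := by
    intro y hy
    rw [show x / y = (y / x)⁻¹ by rw [inv_div], Real.log_inv]
    field_simp
    ring
  -- first inclusion
  have part1 : Set.Ioo (x - r1) (x + r1) ⊆ {y : ℝ | 0 < y ∧ entropicDist x y < t} := by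
    intro y hy
    obtain ⟨hy1, hy2⟩ := hy
    have hy0 : 0 < y := by linarith
    set u := y / x with hudef
    have hu0 : 0 < u := by positivity
    have huhalf : 1 / 2 < u := by
      rw [hudef, lt_div_iff₀ hx]; linarith
    have hgl : 0 ≤ u - 1 - Real.log u := by
      have := Real.log_le_sub_one_of_pos hu0; linarith
    have hgu : u - 1 - Real.log u ≤ (u - 1) ^ 2 := by
      rcases le_or_gt 1 u with h | h
      · have hp := pade_le_log h
        nlinarith [sq_nonneg (u - 1)]
      · have hs := sinh_le_log' hu0 h.le
        nlinarith [sq_nonneg (u - 1)]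
    refine ⟨hy0, ?_⟩
    show |x * Real.log (x / y) - x + y| < t
    rw [hexpr y hy0]
    rw [abs_of_nonneg (mul_nonneg hx.le hgl)]
    have h1 : x * (u - 1 - Real.log u) ≤ x * (u - 1) ^ 2 :=
      mul_le_mul_of_nonneg_left hgu hx.le
    have h2 : x * (u - 1) ^ 2 = (y - x) ^ 2 / x := by
      rw [hudef]; field_simp
    have h3 : (y - x) ^ 2 < r1 ^ 2 := sq_lt_sq' (by linarith) (by linarith)
    rw [hr1sq] at h3
    have h4 : (y - x) ^ 2 / x < 6 * t / 11 := by
      rw [div_lt_iff₀ hx]; nlinarith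
    calc x * (u - 1 - Real.log u) ≤ (y - x) ^ 2 / x := by rw [← h2]; exact h1
      _ < 6 * t / 11 := h4
      _ < t := by linarith
  -- second inclusion
  have part2 : {y : ℝ | 0 < y ∧ entropicDist x y < t} ⊆ Set.Ioo (x - r2) (x + r2) := by
    intro y hy
    obtain ⟨hy0, hd⟩ := hy
    have hd' : |x * Real.log (x / y) - x + y| < t := hd
    rw [hexpr y hy0] at hd'
    set u := y / x with hudef
    have hu0 : 0 < u := by positivity
    have hgl : 0 ≤ u - 1 - Real.log u := by
      have := Real.log_le_sub_one_of_pos hu0; linarith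
    rw [abs_of_nonneg (mul_nonneg hx.le hgl)] at hd'
    have hgx : u - 1 - Real.log u < t / x := by
      rw [lt_div_iff₀ hx]; linarith [mul_comm x (u - 1 - Real.log u)]
    have htx : t / x ≤ 1 / 12 := by
      rw [div_le_iff₀ hx]; linarith
    have htx0 : 0 < t / x := by positivity
    have hkey : (u - 1) ^ 2 < 3 * (t / x) := by
      rcases le_or_gt 1 u with h | h
      · have hs := log_le_sinh h
        have key : (u - 1) ^ 2 ≤ 2 * u * (u - 1 - Real.log u) := by nlinarith
        rcases le_or_gt u (3/2) with h2 | h2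
        · have h6 : 2 * u * (u - 1 - Real.log u) ≤ 3 * (u - 1 - Real.log u) := by
            nlinarith [mul_nonneg (by linarith : (0:ℝ) ≤ 3 - 2*u) hgl]
          linarith
        · exfalso
          have h6 : 2 * u * (u - 1 - Real.log u) < 2 * u * (1/12) :=
            mul_lt_mul_of_pos_left (lt_of_lt_of_le hgx htx) (by linarith)
          nlinarith [mul_pos (by linarith : (0:ℝ) < 2*u - 3) (by linarith : (0:ℝ) < 3*u - 2)]
      · have hp := log_le_pade' hu0 h.le
        have key : (u - 1) ^ 2 ≤ (u + 1) * (u - 1 - Real.log u) := by nlinarith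
        rcases le_or_gt (1/2 : ℝ) u with h2 | h2
        · have h6 : (u + 1) * (u - 1 - Real.log u) ≤ 2 * (u - 1 - Real.log u) := by
            nlinarith [mul_nonneg (by linarith : (0:ℝ) ≤ 1 - u) hgl]
          linarith
        · exfalso
          have h6 : (u + 1) * (u - 1 - Real.log u) < (u + 1) * (1/12) :=
            mul_lt_mul_of_pos_left (hgx.trans_le htx) (by linarith)
          nlinarith [mul_pos (by linarith : (0:ℝ) < 1 - 2*u) (by linarith : (0:ℝ) < 5 - 3*u)]
    have hsq : (y - x) ^ 2 < 3 * x * t := by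
      have hyx : y - x = x * (u - 1) := by rw [hudef]; field_simp
      have h5 := mul_lt_mul_of_pos_left hkey (by positivity : (0:ℝ) < x ^ 2)
      have e : x ^ 2 * (3 * (t / x)) = 3 * x * t := by field_simp
      calc (y - x) ^ 2 = x ^ 2 * (u - 1) ^ 2 := by rw [hyx]; ring
        _ < x ^ 2 * (3 * (t / x)) := h5
        _ = 3 * x * t := e
    have habs : |y - x| < r2 := by
      rw [← Real.sqrt_sq_eq_abs, hr2def]
      exact Real.sqrt_lt_sqrt (sq_nonneg _) hsq
    obtain ⟨ha, hb⟩ := abs_lt.1 habs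
    exact ⟨by linarith, by linarith⟩
  refine ⟨part1, part2, ?_, ?_⟩
  · have hIoo1 : volume (Set.Ioo (x - r1) (x + r1)) = ENNReal.ofReal (2 * r1) := by
      rw [Real.volume_Ioo]; congr 1; ring
    have hIoo2 : volume (Set.Ioo (x - r2) (x + r2)) = ENNReal.ofReal (2 * r2) := by
      rw [Real.volume_Ioo]; congr 1; ring
    have hmono1 : ENNReal.ofReal (2 * r1) ≤ volume {y : ℝ | 0 < y ∧ entropicDist x y < t} :=
      hIoo1 ▸ measure_mono part1
    have hmono2 : volume {y : ℝ | 0 < y ∧ entropicDist x y < t} ≤ ENNReal.ofReal (2 * r2) :=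
      hIoo2 ▸ measure_mono part2
    have hfin : volume {y : ℝ | 0 < y ∧ entropicDist x y < t} ≠ ⊤ :=
      ne_top_of_le_ne_top ENNReal.ofReal_ne_top hmono2
    have := ENNReal.toReal_mono hfin hmono1
    rwa [ENNReal.toReal_ofReal (by positivity)] at this
  · have hIoo2 : volume (Set.Ioo (x - r2) (x + r2)) = ENNReal.ofReal (2 * r2) := by
      rw [Real.volume_Ioo]; congr 1; ring
    have hmono2 : volume {y : ℝ | 0 < y ∧ entropicDist x y < t} ≤ ENNReal.ofReal (2 * r2) :=
      hIoo2 ▸ measure_mono part2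
    have := ENNReal.toReal_mono ENNReal.ofReal_ne_top hmono2
    rwa [ENNReal.toReal_ofReal (by positivity)] at this
end

section
/- Consider the entropic distance on ℝ^k_{>0}, h(x,y) := Σ_{i=1}^k |x_i·log(x_i/y_i) − x_i + y_i|, and let Φ(x,t) := μ(B_t^h(x)) with μ Lebesgue measure, where B_t^h(x) := {y ∈ ℝ^k_{>0} : h(x,y) < t}. Then there exist constants c_k, C_k > 0 depending only on k such that for every x ∈ ℝ^k_{>0} and every t with 0 < t ≤ (min_i x_i)/12: c_k · t^{k/2} · ∏_{i=1}^k x_i^{1/2} ≤ Φ(x,t) ≤ C_k · t^{k/2} · ∏_{i=1}^k x_i^{1/2}. Consequently, the ratio Φ(x,t)/Φ(y,t) is, uniformly in small t, bounded above and below by constant multiples of δ(x,y) := ∏_{i=1}^k (x_i/y_i)^{1/2}, so the entropic distance is volume-regular. -/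
open MeasureTheory Set

/-- The entropic distance on ℝ^k_{>0}. -/
noncomputable def entropicK {k : ℕ} (x y : Fin k → ℝ) : ℝ :=
  ∑ i, |x i * Real.log (x i / y i) - x i + y i|

/-- The volume of the entropic ball of radius `t` around `x` inside the positive orthant. -/
noncomputable def PhiEnt {k : ℕ} (x : Fin k → ℝ) (t : ℝ) : ℝ :=
  (volume {y : Fin k → ℝ | (∀ i, 0 < y i) ∧ entropicK x y < t}).toReal

/-- 1-d entropic ball. -/
def entBall1 (a t : ℝ) : Set ℝ := {s | 0 < s ∧ |a * Real.log (a / s) - a + s| < t}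

lemma entTerm_eq {a s : ℝ} (ha : 0 < a) (hs : 0 < s) :
    a * Real.log (a / s) - a + s = a * (s / a - 1 - Real.log (s / a)) := by
  rw [Real.log_div ha.ne' hs.ne', Real.log_div hs.ne' ha.ne']; field_simp; ring

lemma g_lb {u : ℝ} (hu : 0 < u) : (Real.sqrt u - 1) ^ 2 ≤ u - 1 - Real.log u := by
  have h1 : Real.log (Real.sqrt u) ≤ Real.sqrt u - 1 :=
    Real.log_le_sub_one_of_pos (Real.sqrt_pos.2 hu)
  have h2 : Real.log (Real.sqrt u) = Real.log u / 2 := Real.log_sqrt hu.le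
  have h3 : Real.sqrt u ^ 2 = u := Real.sq_sqrt hu.le
  nlinarith [Real.sqrt_nonneg u]

lemma g_ub {u : ℝ} (hu : 1 / 2 ≤ u) : u - 1 - Real.log u ≤ 2 * (u - 1) ^ 2 := by
  have hu0 : 0 < u := lt_of_lt_of_le one_half_pos hu
  have h1 : 1 - u⁻¹ ≤ Real.log u := Real.one_sub_inv_le_log_of_pos hu0
  have h2 : u * u⁻¹ = 1 := mul_inv_cancel₀ hu0.ne'
  nlinarith [sq_nonneg (u - 1), mul_nonneg (by linarith : (0:ℝ) ≤ 2 * u - 1) (sq_nonneg (u - 1)), mul_pos hu0 hu0]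

lemma entTerm_nonneg {a s : ℝ} (ha : 0 < a) (hs : 0 < s) :
    0 ≤ a * Real.log (a / s) - a + s := by
  rw [entTerm_eq ha hs]
  have hu : 0 < s / a := div_pos hs ha
  have := g_lb hu
  nlinarith [sq_nonneg (Real.sqrt (s / a) - 1)]

/-- Upper containment for the 1-d ball. -/
lemma ball1_subset {a t : ℝ} (ha : 0 < a) (ht : 0 < t) (hta : t ≤ a / 12) :
    entBall1 a t ⊆ Ioo (a - 2 * Real.sqrt (a * t)) (a + 3 * Real.sqrt (a * t)) := by
  intro s hsmem
  obtain ⟨hs, hlt⟩ := hsmem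
  rw [abs_of_nonneg (entTerm_nonneg ha hs)] at hlt
  rw [entTerm_eq ha hs] at hlt
  have hu : 0 < s / a := div_pos hs ha
  have hkey : a * ((Real.sqrt (s / a) - 1) ^ 2) < t :=
    lt_of_le_of_lt (mul_le_mul_of_nonneg_left (g_lb hu) ha.le) hlt
  have hτ : (Real.sqrt (s / a) - 1) ^ 2 < t / a := (lt_div_iff₀ ha).2 (by linarith [hkey])
  set r := Real.sqrt (t / a) with hr
  have hr0 : 0 ≤ r := Real.sqrt_nonneg _
  have hr2 : r ^ 2 = t / a := Real.sq_sqrt (le_of_lt (div_pos ht ha))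
  have hr1 : r ≤ 1 := by
    rw [hr]
    have : t / a ≤ 1 := by
      rw [div_le_one ha]; linarith
    calc Real.sqrt (t / a) ≤ Real.sqrt 1 := Real.sqrt_le_sqrt this
      _ = 1 := Real.sqrt_one
  have habs : |Real.sqrt (s / a) - 1| < r := by
    rw [← Real.sqrt_sq_eq_abs, hr]
    exact Real.sqrt_lt_sqrt (sq_nonneg _) hτ
  rw [abs_lt] at habs
  set S := Real.sqrt (s / a) with hS
  have hS0 : 0 ≤ S := Real.sqrt_nonneg _
  have hS2 : S ^ 2 = s / a := Real.sq_sqrt hu.le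
  have hsa : s = a * S ^ 2 := by rw [hS2]; field_simp
  have hart : a * r = Real.sqrt (a * t) := by
    rw [hr, ← Real.sqrt_sq ha.le, ← Real.sqrt_mul (sq_nonneg a)]
    congr 1
    field_simp
    rw [Real.sq_sqrt (sq_nonneg a)]
  constructor
  · rw [← hart, hsa]
    nlinarith [mul_pos ha (mul_pos (show 0 < S + (1 - r) by nlinarith) (show 0 < S - (1 - r) by linarith [habs.1]))]
  · rw [← hart, hsa]
    nlinarith [mul_nonneg hr0 (by linarith : (0:ℝ) ≤ 1 - r), habs.2, hS0]

/-- Lower containment for the 1-d ball. -/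
lemma subset_ball1 {a t : ℝ} (ha : 0 < a) (ht : 0 < t) (hta : t ≤ a / 12) :
    Ioo (a - Real.sqrt (a * t / 2)) (a + Real.sqrt (a * t / 2)) ⊆ entBall1 a t := by
  intro s hsmem
  obtain ⟨h1, h2⟩ := hsmem
  set q := Real.sqrt (a * t / 2) with hq
  have hq0 : 0 ≤ q := Real.sqrt_nonneg _
  have hq2 : q ^ 2 = a * t / 2 := Real.sq_sqrt (by positivity)
  have hqa : q ≤ a / 2 := by
    rw [hq]
    have h4 : a * t / 2 ≤ (a / 2) ^ 2 := by nlinarith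
    calc Real.sqrt (a * t / 2) ≤ Real.sqrt ((a / 2) ^ 2) := Real.sqrt_le_sqrt h4
      _ = a / 2 := Real.sqrt_sq (by linarith)
  have hs : 0 < s := by linarith
  have hs2 : 1 / 2 ≤ s / a := by
    rw [le_div_iff₀ ha]; linarith
  refine ⟨hs, ?_⟩
  rw [abs_of_nonneg (entTerm_nonneg ha hs), entTerm_eq ha hs]
  have hgu := g_ub hs2
  have key : a * (s / a - 1 - Real.log (s / a)) ≤ a * (2 * (s / a - 1) ^ 2) :=
    mul_le_mul_of_nonneg_left hgu ha.le
  refine lt_of_le_of_lt key ?_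
  have hmul : a * (s / a - 1) = s - a := by field_simp
  have hsq : a ^ 2 * (s / a - 1) ^ 2 = (s - a) ^ 2 := by
    rw [← mul_pow, hmul]
  have hlt : (s - a) ^ 2 < q ^ 2 := by nlinarith
  rw [hq2] at hlt
  nlinarith [sq_nonneg (s / a - 1), mul_pos ha ha]

lemma sqrt_pow_eq {t : ℝ} (ht : 0 ≤ t) (k : ℕ) : Real.sqrt t ^ k = t ^ ((k : ℝ) / 2) := by
  rw [Real.sqrt_eq_rpow, ← Real.rpow_natCast (t ^ (1/2 : ℝ)) k, ← Real.rpow_mul ht]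
  ring_nf

lemma entropic_key {k : ℕ} (hk : 0 < k) (x : Fin k → ℝ) (hx : ∀ i, 0 < x i)
    (t : ℝ) (ht : 0 < t) (hxt : ∀ i, t ≤ x i / 12) :
    (Real.sqrt k)⁻¹ ^ k * t ^ ((k : ℝ) / 2) * ∏ i, Real.sqrt (x i) ≤ PhiEnt x t ∧
      PhiEnt x t ≤ 5 ^ k * t ^ ((k : ℝ) / 2) * ∏ i, Real.sqrt (x i) := by
  have : Nonempty (Fin k) := Fin.pos_iff_nonempty.1 hk
  have hk' : (0 : ℝ) < k := Nat.cast_pos.2 hk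
  have hk1 : (1 : ℝ) ≤ k := by exact_mod_cast hk
  have htk : 0 < t / k := div_pos ht hk'
  have htk_le : ∀ i, t / k ≤ x i / 12 := fun i =>
    le_trans (div_le_self ht.le hk1) (hxt i)
  set S := {y : Fin k → ℝ | (∀ i, 0 < y i) ∧ entropicK x y < t} with hSdef
  have hup : S ⊆ Set.pi univ fun i =>
      Ioo (x i - 2 * Real.sqrt (x i * t)) (x i + 3 * Real.sqrt (x i * t)) := by
    intro y hy i _
    obtain ⟨hy0, hsum⟩ := hy
    apply ball1_subset (hx i) ht (hxt i)
    refine ⟨hy0 i, ?_⟩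
    calc |x i * Real.log (x i / y i) - x i + y i|
        ≤ ∑ j, |x j * Real.log (x j / y j) - x j + y j| :=
          Finset.single_le_sum (f := fun j => |x j * Real.log (x j / y j) - x j + y j|)
            (fun j _ => abs_nonneg _) (Finset.mem_univ i)
      _ < t := hsum
  have hlo : (Set.pi univ fun i =>
      Ioo (x i - Real.sqrt (x i * (t / k) / 2)) (x i + Real.sqrt (x i * (t / k) / 2))) ⊆ S := by
    intro y hy
    have hball : ∀ i, y i ∈ entBall1 (x i) (t / k) := fun i =>
      subset_ball1 (hx i) htk (htk_le i) (hy i (Set.mem_univ i))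
    refine ⟨fun i => (hball i).1, ?_⟩
    have hterm : ∀ i ∈ Finset.univ, |x i * Real.log (x i / y i) - x i + y i| < t / k :=
      fun i _ => (hball i).2
    calc entropicK x y < ∑ _i : Fin k, t / k :=
          Finset.sum_lt_sum_of_nonempty Finset.univ_nonempty hterm
      _ = t := by
          rw [Finset.sum_const, Finset.card_univ, Fintype.card_fin, nsmul_eq_mul]
          field_simp
  have hup_prod_nonneg : ∀ i ∈ Finset.univ, (0:ℝ) ≤ 5 * Real.sqrt (x i * t) := fun i _ => by positivity
  have hlo_prod_nonneg : ∀ i ∈ Finset.univ, (0:ℝ) ≤ 2 * Real.sqrt (x i * (t / k) / 2) :=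
    fun i _ => by positivity
  have hvol_up : volume S ≤ ENNReal.ofReal (∏ i, 5 * Real.sqrt (x i * t)) := by
    calc volume S ≤ volume (Set.pi univ fun i =>
        Ioo (x i - 2 * Real.sqrt (x i * t)) (x i + 3 * Real.sqrt (x i * t))) := measure_mono hup
      _ = ∏ i, volume (Ioo (x i - 2 * Real.sqrt (x i * t)) (x i + 3 * Real.sqrt (x i * t))) :=
          volume_pi_pi _
      _ = ∏ i, ENNReal.ofReal (5 * Real.sqrt (x i * t)) := by
          refine Finset.prod_congr rfl fun i _ => ?_
          rw [Real.volume_Ioo]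
          congr 1
          ring
      _ = ENNReal.ofReal (∏ i, 5 * Real.sqrt (x i * t)) :=
          (ENNReal.ofReal_prod_of_nonneg hup_prod_nonneg).symm
  have hfin : volume S ≠ ⊤ := ne_top_of_le_ne_top ENNReal.ofReal_ne_top hvol_up
  have hvol_lo : ENNReal.ofReal (∏ i, 2 * Real.sqrt (x i * (t / k) / 2)) ≤ volume S := by
    calc ENNReal.ofReal (∏ i, 2 * Real.sqrt (x i * (t / k) / 2))
        = ∏ i, ENNReal.ofReal (2 * Real.sqrt (x i * (t / k) / 2)) :=
          ENNReal.ofReal_prod_of_nonneg hlo_prod_nonneg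
      _ = ∏ i, volume (Ioo (x i - Real.sqrt (x i * (t / k) / 2))
            (x i + Real.sqrt (x i * (t / k) / 2))) := by
          refine Finset.prod_congr rfl fun i _ => ?_
          rw [Real.volume_Ioo]
          congr 1
          ring
      _ = volume (Set.pi univ fun i => Ioo (x i - Real.sqrt (x i * (t / k) / 2))
            (x i + Real.sqrt (x i * (t / k) / 2))) := (volume_pi_pi _).symm
      _ ≤ volume S := measure_mono hlo
  have hPhi : PhiEnt x t = (volume S).toReal := rfl
  constructor
  · have h1 : ∏ i, 2 * Real.sqrt (x i * (t / k) / 2) ≤ PhiEnt x t := by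
      rw [hPhi]
      have := ENNReal.toReal_mono hfin hvol_lo
      rwa [ENNReal.toReal_ofReal (Finset.prod_nonneg hlo_prod_nonneg)] at this
    refine le_trans ?_ h1
    have hfac : ∀ i, (Real.sqrt k)⁻¹ * (Real.sqrt t * Real.sqrt (x i))
        ≤ 2 * Real.sqrt (x i * (t / k) / 2) := by
      intro i
      have hks : (0:ℝ) < Real.sqrt k := Real.sqrt_pos.2 hk'
      have hA : (Real.sqrt k)⁻¹ * (Real.sqrt t * Real.sqrt (x i))
          = Real.sqrt (x i * t / k) := by
        rw [← Real.sqrt_mul ht.le (x i), ← Real.sqrt_inv,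
          ← Real.sqrt_mul (inv_nonneg.2 hk'.le)]
        congr 1
        field_simp
      have hB : 2 * Real.sqrt (x i * (t / k) / 2) = Real.sqrt (4 * (x i * (t / k) / 2)) := by
        rw [Real.sqrt_mul (by norm_num : (0:ℝ) ≤ 4),
          show Real.sqrt 4 = 2 by rw [show (4:ℝ) = 2 ^ 2 by norm_num, Real.sqrt_sq]; norm_num]
      rw [hA, hB]
      apply Real.sqrt_le_sqrt
      have : (4:ℝ) * (x i * (t / k) / 2) = 2 * (x i * t / k) := by ring
      rw [this]
      have : (0:ℝ) ≤ x i * t / k := div_nonneg (mul_nonneg (hx i).le ht.le) hk'.le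
      linarith
    calc (Real.sqrt k)⁻¹ ^ k * t ^ ((k : ℝ) / 2) * ∏ i, Real.sqrt (x i)
        = ∏ i, (Real.sqrt k)⁻¹ * (Real.sqrt t * Real.sqrt (x i)) := by
          rw [Finset.prod_mul_distrib, Finset.prod_mul_distrib, Finset.prod_const,
            Finset.prod_const, Finset.card_univ, Fintype.card_fin, sqrt_pow_eq ht.le]
          ring
      _ ≤ ∏ i, 2 * Real.sqrt (x i * (t / k) / 2) :=
          Finset.prod_le_prod (fun i _ => by positivity) (fun i _ => hfac i)
  · have h1 : PhiEnt x t ≤ ∏ i, 5 * Real.sqrt (x i * t) := by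
      rw [hPhi]
      have := ENNReal.toReal_mono ENNReal.ofReal_ne_top hvol_up
      rwa [ENNReal.toReal_ofReal (Finset.prod_nonneg hup_prod_nonneg)] at this
    refine le_trans h1 (le_of_eq ?_)
    calc ∏ i, 5 * Real.sqrt (x i * t)
        = ∏ i, 5 * Real.sqrt t * Real.sqrt (x i) := by
          refine Finset.prod_congr rfl fun i _ => ?_
          rw [Real.sqrt_mul (hx i).le]
          ring
      _ = 5 ^ k * t ^ ((k : ℝ) / 2) * ∏ i, Real.sqrt (x i) := by
          rw [Finset.prod_mul_distrib, Finset.prod_const, Finset.card_univ, Fintype.card_fin,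
            mul_pow, sqrt_pow_eq ht.le]

theorem entropic_volume_regular {k : ℕ} :
    ∃ c C : ℝ, 0 < c ∧ 0 < C ∧
      (∀ x : Fin k → ℝ, (∀ i, 0 < x i) → ∀ t : ℝ, 0 < t → (∀ i, t ≤ x i / 12) →
        c * t ^ ((k : ℝ) / 2) * ∏ i, Real.sqrt (x i) ≤ PhiEnt x t ∧
          PhiEnt x t ≤ C * t ^ ((k : ℝ) / 2) * ∏ i, Real.sqrt (x i)) ∧
      (∀ x y : Fin k → ℝ, (∀ i, 0 < x i) → (∀ i, 0 < y i) →
        ∀ t : ℝ, 0 < t → (∀ i, t ≤ x i / 12) → (∀ i, t ≤ y i / 12) →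
          (c / C) * ∏ i, Real.sqrt (x i / y i) ≤ PhiEnt x t / PhiEnt y t ∧
            PhiEnt x t / PhiEnt y t ≤ (C / c) * ∏ i, Real.sqrt (x i / y i)) := by
  rcases Nat.eq_zero_or_pos k with rfl | hk
  · have hPhi : ∀ (x : Fin 0 → ℝ) (t : ℝ), 0 < t → PhiEnt x t = 1 := by
      intro x t ht
      have hset : {y : Fin 0 → ℝ | (∀ i, 0 < y i) ∧ entropicK x y < t} = univ := by
        ext y
        simp [entropicK, ht]
      have huniv : (univ : Set (Fin 0 → ℝ)) = Set.pi univ fun _ : Fin 0 => (univ : Set ℝ) := by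
        simp
      rw [PhiEnt, hset, huniv, volume_pi_pi]
      simp
    refine ⟨1, 1, one_pos, one_pos, ?_, ?_⟩
    · intro x hx t ht hxt
      rw [hPhi x t ht]
      norm_num
    · intro x y hx hy t ht hxt hyt
      rw [hPhi x t ht, hPhi y t ht]
      norm_num
  · have hk' : (0 : ℝ) < k := Nat.cast_pos.2 hk
    have hc : (0:ℝ) < (Real.sqrt k)⁻¹ ^ k := pow_pos (inv_pos.2 (Real.sqrt_pos.2 hk')) k
    have hC : (0:ℝ) < 5 ^ k := pow_pos (by norm_num) k
    refine ⟨(Real.sqrt k)⁻¹ ^ k, 5 ^ k, hc, hC, ?_, ?_⟩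
    · exact fun x hx t ht hxt => entropic_key hk x hx t ht hxt
    · intro x y hx hy t ht hxt hyt
      obtain ⟨hx1, hx2⟩ := entropic_key hk x hx t ht hxt
      obtain ⟨hy1, hy2⟩ := entropic_key hk y hy t ht hyt
      have hT : 0 < t ^ ((k : ℝ) / 2) := Real.rpow_pos_of_pos ht _
      have hPx : 0 < ∏ i, Real.sqrt (x i) :=
        Finset.prod_pos fun i _ => Real.sqrt_pos.2 (hx i)
      have hPy : 0 < ∏ i, Real.sqrt (y i) :=
        Finset.prod_pos fun i _ => Real.sqrt_pos.2 (hy i)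
      have hFy : 0 < PhiEnt y t := lt_of_lt_of_le (by positivity) hy1
      have hFx : 0 < PhiEnt x t := lt_of_lt_of_le (by positivity) hx1
      have hprod : ∏ i, Real.sqrt (x i / y i)
          = (∏ i, Real.sqrt (x i)) / ∏ i, Real.sqrt (y i) := by
        rw [← Finset.prod_div_distrib]
        exact Finset.prod_congr rfl fun i _ => Real.sqrt_div (hx i).le _
      constructor
      · have step : ((Real.sqrt k)⁻¹ ^ k * t ^ ((k : ℝ) / 2) * ∏ i, Real.sqrt (x i)) /
            (5 ^ k * t ^ ((k : ℝ) / 2) * ∏ i, Real.sqrt (y i)) ≤ PhiEnt x t / PhiEnt y t :=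
          div_le_div₀ hFx.le hx1 hFy hy2
        refine le_trans (le_of_eq ?_) step
        rw [hprod]
        field_simp
      · have step : PhiEnt x t / PhiEnt y t ≤ (5 ^ k * t ^ ((k : ℝ) / 2) * ∏ i, Real.sqrt (x i)) /
            ((Real.sqrt k)⁻¹ ^ k * t ^ ((k : ℝ) / 2) * ∏ i, Real.sqrt (y i)) :=
          div_le_div₀ (by positivity) hx2 (by positivity) hy1
        refine le_trans step (le_of_eq ?_)
        rw [hprod]
        field_simp
end

section
/- Let 0 < ε < 1/√2 and a ∈ (0,1). Define r : (0,1) → ℝ by r(t) := t·(1 + ε·a·sin(log(1/t))). Then r is strictly monotone increasing on (0,1) (its derivative r'(t) = 1 + ε·a·(sin(log(1/t)) − cos(log(1/t))) is strictly positive), r(t) → 0 as t → 0⁺, and (1−ε)·t < r(t) < (1+ε)·t for all t ∈ (0,1). -/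
open Filter Set

theorem oscillating_radius_properties (ε a : ℝ)
    (hε : 0 < ε) (hε' : ε < 1 / Real.sqrt 2) (ha : 0 < a) (ha' : a < 1) :
    StrictMonoOn (fun t : ℝ => t * (1 + ε * a * Real.sin (Real.log (1 / t))))
        (Set.Ioo 0 1) ∧
      (∀ t ∈ Set.Ioo (0 : ℝ) 1,
        HasDerivAt (fun t : ℝ => t * (1 + ε * a * Real.sin (Real.log (1 / t))))
          (1 + ε * a * (Real.sin (Real.log (1 / t)) - Real.cos (Real.log (1 / t)))) t ∧
        0 < 1 + ε * a * (Real.sin (Real.log (1 / t)) - Real.cos (Real.log (1 / t)))) ∧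
      Tendsto (fun t : ℝ => t * (1 + ε * a * Real.sin (Real.log (1 / t))))
        (nhdsWithin 0 (Set.Ioi 0)) (nhds 0) ∧
      (∀ t ∈ Set.Ioo (0 : ℝ) 1,
        (1 - ε) * t < t * (1 + ε * a * Real.sin (Real.log (1 / t))) ∧
          t * (1 + ε * a * Real.sin (Real.log (1 / t))) < (1 + ε) * t) := by
  have hs2 : (0:ℝ) < Real.sqrt 2 := Real.sqrt_pos.mpr (by norm_num)
  have hsq : Real.sqrt 2 ^ 2 = 2 := Real.sq_sqrt (by norm_num)
  have hs1 : (1:ℝ) < Real.sqrt 2 := by nlinarith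
  have hεs : ε * Real.sqrt 2 < 1 := (lt_div_iff₀ hs2).mp hε'
  have hε1 : ε < 1 := by nlinarith
  have hεa1 : ε * a < 1 := by nlinarith
  have hε2 : 2 * ε ^ 2 < 1 := by nlinarith
  have hεa : 0 < ε * a := mul_pos hε ha
  -- derivative
  have hderiv : ∀ t ∈ Set.Ioo (0 : ℝ) 1,
      HasDerivAt (fun t : ℝ => t * (1 + ε * a * Real.sin (Real.log (1 / t))))
        (1 + ε * a * (Real.sin (Real.log (1 / t)) - Real.cos (Real.log (1 / t)))) t := by
    intro t ht
    have ht0 : t ≠ 0 := ne_of_gt ht.1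
    have h1 : HasDerivAt (fun t : ℝ => 1 / t) (-1 / t ^ 2) t := by
      simpa using (hasDerivAt_inv ht0).congr_deriv (by ring)
    have h2 : HasDerivAt (fun t : ℝ => Real.log (1 / t)) (-1 / t) t := by
      have := h1.log (by simp [ht0])
      convert this using 1
      field_simp
    have h3 : HasDerivAt (fun t : ℝ => Real.sin (Real.log (1 / t)))
        (Real.cos (Real.log (1 / t)) * (-1 / t)) t := h2.sin
    have h4 : HasDerivAt (fun t : ℝ => 1 + ε * a * Real.sin (Real.log (1 / t)))
        (ε * a * (Real.cos (Real.log (1 / t)) * (-1 / t))) t :=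
      (h3.const_mul (ε * a)).const_add 1
    have h5 := (hasDerivAt_id t).mul h4
    refine h5.congr_deriv ?_
    simp only [id]
    field_simp
    ring
  have hpos : ∀ t ∈ Set.Ioo (0 : ℝ) 1,
      0 < 1 + ε * a * (Real.sin (Real.log (1 / t)) - Real.cos (Real.log (1 / t))) := by
    intro t ht
    set s := Real.sin (Real.log (1 / t))
    set c := Real.cos (Real.log (1 / t))
    have hsc : s ^ 2 + c ^ 2 = 1 := Real.sin_sq_add_cos_sq _
    have habs : (ε * a * (s - c)) ^ 2 < 1 := by
      have h2' : (s - c) ^ 2 ≤ 2 := by nlinarith [sq_nonneg (s + c)]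
      have := mul_le_mul_of_nonneg_left h2' (sq_nonneg (ε * a))
      nlinarith [sq_nonneg a, mul_pos ha ha]
    nlinarith [sq_nonneg (1 + ε * a * (s - c))]
  have hbound : ∀ t ∈ Set.Ioo (0 : ℝ) 1,
      (1 - ε) * t < t * (1 + ε * a * Real.sin (Real.log (1 / t))) ∧
        t * (1 + ε * a * Real.sin (Real.log (1 / t))) < (1 + ε) * t := by
    intro t ht
    have hsin := Real.neg_one_le_sin (Real.log (1 / t))
    have hsin' := Real.sin_le_one (Real.log (1 / t))
    have hl : -ε < ε * a * Real.sin (Real.log (1 / t)) := by nlinarith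
    have hr : ε * a * Real.sin (Real.log (1 / t)) < ε := by nlinarith
    constructor
    · nlinarith [mul_pos ht.1 (show 0 < ε + ε * a * Real.sin (Real.log (1 / t)) by linarith)]
    · nlinarith [mul_pos ht.1 (show 0 < ε - ε * a * Real.sin (Real.log (1 / t)) by linarith)]
  refine ⟨?_, fun t ht => ⟨hderiv t ht, hpos t ht⟩, ?_, hbound⟩
  · apply strictMonoOn_of_deriv_pos (convex_Ioo 0 1)
    · exact fun t ht => (hderiv t ht).continuousAt.continuousWithinAt
    · intro t ht
      rw [interior_Ioo] at ht
      rw [(hderiv t ht).deriv]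
      exact hpos t ht
  · have h1 : Tendsto (fun t : ℝ => 2 * t) (nhdsWithin 0 (Set.Ioi 0)) (nhds 0) := by
      have h0 : Tendsto (fun t : ℝ => 2 * t) (nhds 0) (nhds (2 * 0)) :=
        (continuous_const.mul continuous_id).tendsto 0
      simpa using h0.mono_left nhdsWithin_le_nhds
    apply squeeze_zero' (g := fun t => 2 * t)
    · filter_upwards [self_mem_nhdsWithin] with t ht
      have ht0 : (0:ℝ) < t := ht
      have hsin := Real.neg_one_le_sin (Real.log (1 / t))
      have hl : -1 < ε * a * Real.sin (Real.log (1 / t)) := by nlinarith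
      nlinarith [mul_pos ht0 (show 0 < 1 + ε * a * Real.sin (Real.log (1 / t)) by linarith)]
    · filter_upwards [self_mem_nhdsWithin] with t ht
      have ht0 : (0:ℝ) < t := ht
      have hsin' := Real.sin_le_one (Real.log (1 / t))
      have hr : ε * a * Real.sin (Real.log (1 / t)) < 1 := by nlinarith
      nlinarith [mul_pos ht0 (show 0 < 1 - ε * a * Real.sin (Real.log (1 / t)) by linarith)]
    · exact h1
end
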